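/- arXiv:2507.14379 — 13 statements merged into one kernel-verified Lean document; each statement's English description precedes it below -/
import Mathlib

section
/- Let p : 𝒟 ⥤ 𝒞 be a fibration and assume 𝒞 has pullbacks. Then for every cartesian morphism f : a ⟶ d of 𝒟 and every morphism g : b ⟶ d of 𝒟, there exist an object P of 𝒟 and morphisms ḡ : P ⟶ a and f̄ : P ⟶ b such that f ∘ ḡ = g ∘ f̄, this square is a pullback square in 𝒟, and f̄ : P ⟶ b is cartesian for p. -/
open CategoryTheory Limits

/-- A morphism `f : d' ⟶ d` is cartesian for a functor `p : 𝒟 ⥤ 𝒞`. -/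
def IsCartesianFor {D : Type*} [Category D] {C : Type*} [Category C] (p : D ⥤ C)
    {d' d : D} (f : d' ⟶ d) : Prop :=
  ∀ {d'' : D} (g : d'' ⟶ d) (h : p.obj d'' ⟶ p.obj d'),
    h ≫ p.map f = p.map g → ∃! h' : d'' ⟶ d', p.map h' = h ∧ h' ≫ f = g

/-- A functor `p : 𝒟 ⥤ 𝒞` is a fibration in the Street sense. -/
def IsStreetFibration {D : Type*} [Category D] {C : Type*} [Category C] (p : D ⥤ C) : Prop :=
  ∀ (d : D) (c : C) (f : c ⟶ p.obj d),
    ∃ (d' : D) (fhat : d' ⟶ d) (σ : p.obj d' ≅ c),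
      IsCartesianFor p fhat ∧ p.map fhat = σ.hom ≫ f

/-!
Pull back `p f` and `p g` in the base to `Q`, take a cartesian lift `fbar : P ⟶ b` of
`Q ⟶ p b`, and let `gbar : P ⟶ a` be the lift of `fbar ≫ g` through `f` over `Q ⟶ p a`.
The square lies over a pullback square and both `f` and `fbar` are cartesian, so a cone over
`f, g` is first factored in the base and then lifted through `fbar`; cartesianness of `f`
identifies the other leg.
-/

namespace IsCartesianFor

variable {D : Type*} [Category D] {C : Type*} [Category C] {p : D ⥤ C} {d' d : D} {f : d' ⟶ d}

theorem hom_ext (hf : IsCartesianFor p f) {x : D} {h₁ h₂ : x ⟶ d'}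
    (hmap : p.map h₁ = p.map h₂) (hcomp : h₁ ≫ f = h₂ ≫ f) : h₁ = h₂ :=
  (hf (h₂ ≫ f) (p.map h₂) (p.map_comp h₂ f).symm).unique ⟨hmap, hcomp⟩ ⟨rfl, rfl⟩

noncomputable def lift (hf : IsCartesianFor p f) {x : D} (g : x ⟶ d) (h : p.obj x ⟶ p.obj d')
    (w : h ≫ p.map f = p.map g) : x ⟶ d' :=
  (hf g h w).exists.choose

@[simp]
theorem map_lift (hf : IsCartesianFor p f) {x : D} (g : x ⟶ d) (h : p.obj x ⟶ p.obj d')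
    (w : h ≫ p.map f = p.map g) : p.map (hf.lift g h w) = h :=
  (hf g h w).exists.choose_spec.1

@[simp]
theorem lift_comp (hf : IsCartesianFor p f) {x : D} (g : x ⟶ d) (h : p.obj x ⟶ p.obj d')
    (w : h ≫ p.map f = p.map g) : hf.lift g h w ≫ f = g :=
  (hf g h w).exists.choose_spec.2

end IsCartesianFor

theorem isPullback_of_isPullback_map {D : Type*} [Category D] {C : Type*} [Category C]
    {p : D ⥤ C} {P a b c : D} {gbar : P ⟶ a} {fbar : P ⟶ b} {f : a ⟶ c} {g : b ⟶ c}
    (hf : IsCartesianFor p f) (hfbar : IsCartesianFor p fbar) (w : gbar ≫ f = fbar ≫ g)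
    (hsq : IsPullback (p.map gbar) (p.map fbar) (p.map f) (p.map g)) :
    IsPullback gbar fbar f g := by
  have hom_ext {x : D} {k l : x ⟶ P}
      (h₁ : k ≫ gbar = l ≫ gbar) (h₂ : k ≫ fbar = l ≫ fbar) : k = l :=
    hfbar.hom_ext
      (hsq.hom_ext (by simp only [← p.map_comp, h₁]) (by simp only [← p.map_comp, h₂])) h₂
  let lift (s : PullbackCone f g) : s.pt ⟶ P :=
    hfbar.lift s.snd
      (hsq.lift (p.map s.fst) (p.map s.snd) (by simp only [← p.map_comp, s.condition])) (by simp)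
  have lift_snd (s : PullbackCone f g) : lift s ≫ fbar = s.snd := hfbar.lift_comp ..
  have lift_fst (s : PullbackCone f g) : lift s ≫ gbar = s.fst :=
    hf.hom_ext (by simp [lift])
      (by rw [Category.assoc, w, ← Category.assoc, lift_snd, s.condition])
  exact IsPullback.of_isLimit' ⟨w⟩ <| PullbackCone.IsLimit.mk w lift lift_fst lift_snd
    fun s m h₁ h₂ => hom_ext (h₁.trans (lift_fst s).symm) (h₂.trans (lift_snd s).symm)

/-- In a fibration over a base with pullbacks, the pullback of a cartesian arrow along any
arrow exists and is still cartesian. -/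
theorem pullback_of_cartesian_exists_and_isCartesian
    {D : Type*} [Category D] {C : Type*} [Category C] (p : D ⥤ C)
    (hp : IsStreetFibration p) [HasPullbacks C]
    {a b d : D} (f : a ⟶ d) (hf : IsCartesianFor p f) (g : b ⟶ d) :
    ∃ (P : D) (gbar : P ⟶ a) (fbar : P ⟶ b),
      IsPullback gbar fbar f g ∧ IsCartesianFor p fbar := by
  obtain ⟨P, fbar, σ, hfbar, hσ⟩ := hp b _ (pullback.snd (p.map f) (p.map g))
  have hcomm : (σ.hom ≫ pullback.fst _ _) ≫ p.map f = p.map (fbar ≫ g) := by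
    rw [Category.assoc, pullback.condition, p.map_comp, hσ, Category.assoc]
  let gbar := hf.lift (fbar ≫ g) _ hcomm
  have hsq : IsPullback (p.map gbar) (p.map fbar) (p.map f) (p.map g) :=
    IsPullback.of_iso_pullback ⟨by rw [← p.map_comp, ← p.map_comp, hf.lift_comp]⟩ σ
      (hf.map_lift _ _ hcomm).symm hσ.symm
  exact ⟨P, gbar, fbar,
    isPullback_of_isPullback_map hf hfbar (hf.lift_comp _ _ hcomm) hsq, hfbar⟩
end

section
/- Let 𝒜 be a category with binary products, ℬ a category, G : ℬ ⥤ 𝒜 a functor, and 𝒳 = Comma (𝟭 𝒜) G. A family of morphisms ((g_i, h_i) : (F_i, E_i, α_i) ⟶ (F, E, α))_{i∈I} in 𝒳 is jointly epimorphic if and only if the family (g_i : F_i ⟶ F)_{i∈I} is jointly epimorphic in 𝒜 and the family (h_i : E_i ⟶ E)_{i∈I} is jointly epimorphic in ℬ. -/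
open CategoryTheory Limits

/-- A family of morphisms `(e i : Xs i ⟶ X)` is jointly epimorphic if any two morphisms
`a, b : X ⟶ Y` with `a ∘ e i = b ∘ e i` for all `i` are equal. -/
def JointlyEpi {C : Type*} [Category C] {ι : Type*} {X : C} {Xs : ι → C}
    (e : ∀ i, Xs i ⟶ X) : Prop :=
  ∀ {Y : C} (a b : X ⟶ Y), (∀ i, e i ≫ a = e i ≫ b) → a = b

/-!
Morphisms of the comma category are pairs, so a family whose two component families are
jointly epimorphic is jointly epimorphic. Conversely, to separate `a, b : E ⟶ Y` in `ℬ` one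
tests against the comma object `(G Y, Y, 𝟙)`, into which `X` maps by `(α ≫ G a, a)`; to
separate `a, b : F ⟶ Y` in `𝒜` one tests against `(Y ⨯ G E, E, snd)`, into which `X` maps by
`(⟨a, α⟩, 𝟙)`. In both cases the component of the test morphism recovers `a`.
-/

namespace CategoryTheory.Comma

universe v₁ v₂ u₁ u₂

variable {A : Type u₁} [Category.{v₁} A] {B : Type u₂} [Category.{v₂} B]

theorem jointlyEpi_of_jointlyEpi_left_of_jointlyEpi_right {T : Type*} [Category T]
    {L : A ⥤ T} {R : B ⥤ T} {ι : Type*} {X : Comma L R} {Z : ι → Comma L R} {φ : ∀ i, Z i ⟶ X}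
    (hl : JointlyEpi fun i => (φ i).left) (hr : JointlyEpi fun i => (φ i).right) :
    JointlyEpi φ := fun _ _ hab =>
  CommaMorphism.ext (hl _ _ fun i => congrArg CommaMorphism.left (hab i))
    (hr _ _ fun i => congrArg CommaMorphism.right (hab i))

variable (G : B ⥤ A)

abbrev ofRight (Y : B) : Comma (𝟭 A) G := ⟨G.obj Y, Y, 𝟙 _⟩

@[simps]
def toOfRight (X : Comma (𝟭 A) G) {Y : B} (b : X.right ⟶ Y) : X ⟶ ofRight G Y where
  left := X.hom ≫ G.map b
  right := b

theorem comp_toOfRight {Z X : Comma (𝟭 A) G} (f : Z ⟶ X) {Y : B} (b : X.right ⟶ Y) :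
    f ≫ toOfRight G X b = toOfRight G Z (f.right ≫ b) := by
  ext
  · simp [← f.w_assoc]
  · rfl

theorem jointlyEpi_right_of_jointlyEpi {ι : Type*} {X : Comma (𝟭 A) G} {Z : ι → Comma (𝟭 A) G}
    {φ : ∀ i, Z i ⟶ X} (h : JointlyEpi φ) : JointlyEpi fun i => (φ i).right :=
  fun a b hab => congrArg CommaMorphism.right <|
    h (toOfRight G X a) (toOfRight G X b) fun i => by
      rw [comp_toOfRight, comp_toOfRight, hab i]

variable [HasBinaryProducts A]

noncomputable abbrev prodLeft (Y : A) (E : B) : Comma (𝟭 A) G := ⟨Y ⨯ G.obj E, E, prod.snd⟩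

@[simps]
noncomputable def toProdLeft (X : Comma (𝟭 A) G) {Y : A} (a : X.left ⟶ Y) :
    X ⟶ prodLeft G Y X.right where
  left := prod.lift a X.hom
  right := 𝟙 _
  w := by simpa using prod.lift_snd a X.hom

theorem toProdLeft_left_fst (X : Comma (𝟭 A) G) {Y : A} (a : X.left ⟶ Y) :
    (toProdLeft G X a).left ≫ prod.fst = a :=
  prod.lift_fst _ _

theorem comp_toProdLeft_eq {Z X : Comma (𝟭 A) G} (f : Z ⟶ X) {Y : A} {a b : X.left ⟶ Y}
    (hab : f.left ≫ a = f.left ≫ b) : f ≫ toProdLeft G X a = f ≫ toProdLeft G X b :=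
  CommaMorphism.ext (by simp only [Comma.comp_left, toProdLeft_left, prod.comp_lift, hab]) rfl

theorem jointlyEpi_left_of_jointlyEpi {ι : Type*} {X : Comma (𝟭 A) G} {Z : ι → Comma (𝟭 A) G}
    {φ : ∀ i, Z i ⟶ X} (h : JointlyEpi φ) : JointlyEpi fun i => (φ i).left := fun a b hab => by
  have := congrArg (fun f => f.left ≫ prod.fst)
    (h (toProdLeft G X a) (toProdLeft G X b) fun i => comp_toProdLeft_eq G (φ i) (hab i))
  simpa only [toProdLeft_left_fst] using this

end CategoryTheory.Comma

open CategoryTheory.Comma in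
/-- A family of morphisms in the comma category `Comma (𝟭 𝒜) G` (for `𝒜` with binary
products) is jointly epimorphic iff both families of components are jointly epimorphic. -/
theorem jointlyEpi_comma_iff
    {A : Type*} [Category A] {B : Type*} [Category B] [HasBinaryProducts A] (G : B ⥤ A)
    {ι : Type*} {X : Comma (𝟭 A) G} {Z : ι → Comma (𝟭 A) G} (φ : ∀ i, Z i ⟶ X) :
    JointlyEpi φ ↔
      (JointlyEpi (fun i => (φ i).left) ∧ JointlyEpi (fun i => (φ i).right)) :=
  ⟨fun h => ⟨jointlyEpi_left_of_jointlyEpi G h, jointlyEpi_right_of_jointlyEpi G h⟩,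
    fun h => jointlyEpi_of_jointlyEpi_left_of_jointlyEpi_right h.1 h.2⟩
end

section
/- Let (𝒟,K) and (𝒞,J) be small sites and p : 𝒟 ⥤ 𝒞 a comorphism of sites. Let C_p^* : Sheaf J ⥤ Sheaf K be the composite of the inclusion of J-sheaves into presheaves on 𝒞, precomposition with p.op, and K-sheafification. Then every object (F, E, α : F ⟶ C_p^*(E)) of the comma category Comma (𝟭 (Sheaf K)) C_p^* admits a jointly epimorphic family of morphisms ((g_i, h_i) : (F_i, E_i, α_i) ⟶ (F, E, α))_{i∈I} such that for every i, E_i is isomorphic to l_J(c_i) for some object c_i of 𝒞, and F_i is either an initial object of Sheaf K or isomorphic to l_K(d_i) for some object d_i of 𝒟. -/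
/-!
Maps `l_J c ⟶ E` out of sheafified representables are jointly epimorphic onto any sheaf `E`,
so the morphisms out of the objects `(⊥, l_J c, !)` detect the second component.
For the first component, a map `f : l_K d ⟶ F` gives through `α` a section of the
sheafification of `E ∘ p` at `d`. Locally on a `K`-cover `g : d' ⟶ d` this section comes from a
section of `E` at `p d'`, i.e. from a map `l_J (p d') ⟶ E`; together with `l_K g ≫ f` it is a
morphism into `(F, E, α)` out of `(l_K d', l_J (p d'), η)`, where `η : l_K d' ⟶ C_p^*(l_J (p d'))`
is the canonical map. Since sheaves are separated, these restrictions of `f` detect the first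
component.
-/

open CategoryTheory Limits

universe u

/-- A functor `p : (𝒟, K) ⥤ (𝒞, J)` is a comorphism of sites if for every `J`-covering sieve
`S` on `p(d)`, the sieve `{g | p(g) ∈ S}` is `K`-covering. -/
def IsComorphismOfSites {D : Type*} [Category D] {C : Type*} [Category C] (p : D ⥤ C)
    (K : GrothendieckTopology D) (J : GrothendieckTopology C) : Prop :=
  ∀ (d : D) (S : Sieve (p.obj d)), S ∈ J (p.obj d) → S.functorPullback p ∈ K d

variable {D C : Type u} [SmallCategory D] [SmallCategory C]

/-- `l_J : 𝒞 ⥤ Sheaf J`, the Yoneda embedding followed by sheafification. -/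
noncomputable def lSh (J : GrothendieckTopology C) : C ⥤ Sheaf J (Type u) :=
  yoneda ⋙ presheafToSheaf J (Type u)

/-- `C_p^* : Sheaf J ⥤ Sheaf K`, the composite of the inclusion of `J`-sheaves into
presheaves, precomposition with `p.op`, and `K`-sheafification. -/
noncomputable def CpStar (p : D ⥤ C)
    (K : GrothendieckTopology D) (J : GrothendieckTopology C) :
    Sheaf J (Type u) ⥤ Sheaf K (Type u) :=
  sheafToPresheaf J (Type u) ⋙ (Functor.whiskeringLeft Dᵒᵖ Cᵒᵖ (Type u)).obj p.op ⋙
    presheafToSheaf K (Type u)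


open Opposite

section lSh

variable (L : GrothendieckTopology C)

noncomputable def lShHomEquiv (G : Sheaf L (Type u)) (c : C) :
    ((lSh L).obj c ⟶ G) ≃ G.obj.obj (op c) :=
  ((sheafificationAdjunction L (Type u)).homEquiv (yoneda.obj c) G).trans yonedaEquiv

variable {L}

lemma lShHomEquiv_map_comp {c c' : C} (g : c' ⟶ c) {G : Sheaf L (Type u)}
    (a : (lSh L).obj c ⟶ G) :
    lShHomEquiv L G c' ((lSh L).map g ≫ a) = G.obj.map g.op (lShHomEquiv L G c a) :=
  (congrArg yonedaEquiv (Adjunction.homEquiv_naturality_left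
    (sheafificationAdjunction L (Type u)) (yoneda.map g) a)).trans (yonedaEquiv_naturality _ _).symm

lemma lShHomEquiv_comp {c : C} {G G' : Sheaf L (Type u)}
    (a : (lSh L).obj c ⟶ G) (h : G ⟶ G') :
    lShHomEquiv L G' c (a ≫ h) = h.hom.app (op c) (lShHomEquiv L G c a) :=
  (congrArg yonedaEquiv (Adjunction.homEquiv_naturality_right
    (sheafificationAdjunction L (Type u)) a h)).trans (yonedaEquiv_comp _ _)

lemma lShHomEquiv_apply {c : C} {G : Sheaf L (Type u)} (a : (lSh L).obj c ⟶ G) :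
    lShHomEquiv L G c a = a.hom.app (op c) ((toSheafify L (yoneda.obj c)).app (op c) (𝟙 c)) :=
  congrArg yonedaEquiv (Adjunction.homEquiv_unit (adj := sheafificationAdjunction L (Type u))
    (f := a))

lemma hom_ext_of_lSh {G G' : Sheaf L (Type u)} {a b : G ⟶ G'}
    (h : ∀ (c : C) (f : (lSh L).obj c ⟶ G), f ≫ a = f ≫ b) : a = b := by
  apply Sheaf.hom_ext
  ext ⟨c⟩ x
  have hx := congrArg (lShHomEquiv L G' c) (h c ((lShHomEquiv L G c).symm x))
  rwa [lShHomEquiv_comp, lShHomEquiv_comp, Equiv.apply_symm_apply] at hx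

lemma lSh_hom_ext_of_mem {c : C} {R : Sieve c} (hR : R ∈ L c) {G : Sheaf L (Type u)}
    {a b : (lSh L).obj c ⟶ G}
    (h : ∀ ⦃c' : C⦄ (g : c' ⟶ c), R g → (lSh L).map g ≫ a = (lSh L).map g ≫ b) : a = b := by
  apply (lShHomEquiv L G c).injective
  apply (((isSheaf_iff_isSheaf_of_type L G.obj).1 G.property).isSeparated R hR).ext
  intro c' g hg
  simpa only [lShHomEquiv_map_comp] using congrArg (lShHomEquiv L G c') (h g hg)

end lSh

namespace CpStar

variable (p : D ⥤ C) (K : GrothendieckTopology D) (J : GrothendieckTopology C)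

noncomputable def unitLSh (d : D) : (lSh K).obj d ⟶ (CpStar p K J).obj ((lSh J).obj (p.obj d)) :=
  (lShHomEquiv K _ d).symm
    ((toSheafify K (p.op ⋙ ((lSh J).obj (p.obj d)).obj)).app (op d)
      ((toSheafify J (yoneda.obj (p.obj d))).app (op (p.obj d)) (𝟙 (p.obj d))))

variable {p K J} in
lemma lShHomEquiv_unitLSh_comp_map {d : D} {E : Sheaf J (Type u)}
    (s : E.obj.obj (op (p.obj d))) :
    lShHomEquiv K _ d (unitLSh p K J d ≫ (CpStar p K J).map ((lShHomEquiv J E (p.obj d)).symm s)) =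
      (toSheafify K (p.op ⋙ E.obj)).app (op d) s := by
  set γ := (lShHomEquiv J E (p.obj d)).symm s
  have hγ : γ.hom.app (op (p.obj d))
      ((toSheafify J (yoneda.obj (p.obj d))).app (op (p.obj d)) (𝟙 (p.obj d))) = s := by
    rw [← lShHomEquiv_apply, Equiv.apply_symm_apply]
  rw [lShHomEquiv_comp]
  refine (congrArg (((CpStar p K J).map γ).hom.app (op d)) (Equiv.apply_symm_apply _ _)).trans ?_
  exact (ConcreteCategory.congr_hom (NatTrans.congr_app
    (toSheafify_naturality K (Functor.whiskerLeft p.op γ.hom)) (op d)) _).symm.trans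
      (congrArg ((toSheafify K (p.op ⋙ E.obj)).app (op d)) hγ)

-- Instance search for this exceeds the default heartbeat budget.
noncomputable local instance : HasInitial (Sheaf K (Type u)) :=
  Sheaf.instHasColimitsOfShape

noncomputable def botComma (c : C) : Comma (𝟭 (Sheaf K (Type u))) (CpStar p K J) :=
  ⟨⊥_ _, (lSh J).obj c, initial.to _⟩

noncomputable def lShComma (d : D) : Comma (𝟭 (Sheaf K (Type u))) (CpStar p K J) :=
  ⟨(lSh K).obj d, (lSh J).obj (p.obj d), unitLSh p K J d⟩

variable {p K J} (X : Comma (𝟭 (Sheaf K (Type u))) (CpStar p K J))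

noncomputable def botCommaHom {c : C} (γ : (lSh J).obj c ⟶ X.right) : botComma p K J c ⟶ X :=
  ⟨initial.to _, γ, initial.hom_ext _ _⟩

/-- `s` lifts, along the unit of `K`-sheafification, the section of `C_p^*(E)` classified by
`a ≫ α`. -/
def IsLift {d : D} (a : (lSh K).obj d ⟶ X.left) (s : X.right.obj.obj (op (p.obj d))) : Prop :=
  lShHomEquiv K _ d (a ≫ X.hom) = (toSheafify K (p.op ⋙ X.right.obj)).app (op d) s

variable {X} in
noncomputable def lShCommaHom {d : D} {a : (lSh K).obj d ⟶ X.left}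
    {s : X.right.obj.obj (op (p.obj d))} (h : IsLift X a s) : lShComma p K J d ⟶ X :=
  ⟨a, (lShHomEquiv J X.right (p.obj d)).symm s, by
    apply (lShHomEquiv K _ d).injective
    exact h.trans (lShHomEquiv_unitLSh_comp_map s).symm⟩

lemma exists_isLift {d : D} (f : (lSh K).obj d ⟶ X.left) :
    ∃ R ∈ K d, ∀ ⦃d' : D⦄ (g : d' ⟶ d), R g → ∃ s, IsLift X ((lSh K).map g ≫ f) s := by
  refine ⟨_, Presheaf.imageSieve_mem K (toSheafify K (p.op ⋙ X.right.obj))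
    (lShHomEquiv K _ d (f ≫ X.hom)), fun d' g ⟨s, hs⟩ => ⟨s, ?_⟩⟩
  rw [IsLift, Category.assoc, lShHomEquiv_map_comp]
  exact hs.symm

def coverIndex : Type u :=
  (Σ c : C, (lSh J).obj c ⟶ X.right) ⊕
    Σ d : D, {as : ((lSh K).obj d ⟶ X.left) × X.right.obj.obj (op (p.obj d)) //
      IsLift X as.1 as.2}

noncomputable def coverObj : coverIndex X → Comma (𝟭 (Sheaf K (Type u))) (CpStar p K J)
  | .inl ⟨c, _⟩ => botComma p K J c
  | .inr ⟨d, _⟩ => lShComma p K J d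

noncomputable def coverHom : ∀ i, coverObj X i ⟶ X
  | .inl ⟨_, γ⟩ => botCommaHom X γ
  | .inr ⟨_, ⟨_, h⟩⟩ => lShCommaHom h

lemma jointlyEpi_coverHom : JointlyEpi (coverHom X) := by
  intro Y a b h
  ext : 1
  · refine hom_ext_of_lSh fun d f => ?_
    obtain ⟨R, hR, hlift⟩ := exists_isLift X f
    refine lSh_hom_ext_of_mem hR fun d' g hg => ?_
    obtain ⟨s, hs⟩ := hlift g hg
    have hg : ((lSh K).map g ≫ f) ≫ a.left = ((lSh K).map g ≫ f) ≫ b.left :=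
      congrArg CommaMorphism.left (h (.inr ⟨d', ⟨_, s⟩, hs⟩))
    simpa only [Category.assoc] using hg
  · refine hom_ext_of_lSh fun c γ => ?_
    exact congrArg CommaMorphism.right (h (.inl ⟨c, γ⟩))

lemma coverObj_right_lSh_and_left_initial_or_lSh (i : coverIndex X) :
    (∃ c : C, Nonempty ((coverObj X i).right ≅ (lSh J).obj c)) ∧
      (Nonempty (IsInitial ((coverObj X i).left)) ∨
        ∃ d : D, Nonempty ((coverObj X i).left ≅ (lSh K).obj d)) := by
  rcases i with ⟨c, _⟩ | ⟨d, _⟩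
  · exact ⟨⟨c, ⟨Iso.refl _⟩⟩, .inl ⟨initialIsInitial⟩⟩
  · exact ⟨⟨p.obj d, ⟨Iso.refl _⟩⟩, .inr ⟨d, ⟨Iso.refl _⟩⟩⟩

end CpStar

open CpStar in
theorem comma_cover_by_generators_general
    (K : GrothendieckTopology D) (J : GrothendieckTopology C)
    (p : D ⥤ C)
    (X : Comma (𝟭 (Sheaf K (Type u))) (CpStar p K J)) :
    ∃ (ι : Type u) (Z : ι → Comma (𝟭 (Sheaf K (Type u))) (CpStar p K J))
      (φ : ∀ i, Z i ⟶ X),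
      JointlyEpi φ ∧
        ∀ i, (∃ c : C, Nonempty ((Z i).right ≅ (lSh J).obj c)) ∧
          (Nonempty (IsInitial ((Z i).left)) ∨
            ∃ d : D, Nonempty ((Z i).left ≅ (lSh K).obj d)) :=
  ⟨coverIndex X, coverObj X, coverHom X, jointlyEpi_coverHom X, coverObj_right_lSh_and_left_initial_or_lSh X⟩

/-- Every object of the comma category `(Sheaf K / C_p^*)` admits a jointly epimorphic
family of morphisms whose sources have second component of the form `l_J(c)` and first
component either initial or of the form `l_K(d)`. -/
theorem comma_cover_by_generators
    (K : GrothendieckTopology D) (J : GrothendieckTopology C)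
    (p : D ⥤ C) (hp : IsComorphismOfSites p K J)
    (X : Comma (𝟭 (Sheaf K (Type u))) (CpStar p K J)) :
    ∃ (ι : Type u) (Z : ι → Comma (𝟭 (Sheaf K (Type u))) (CpStar p K J))
      (φ : ∀ i, Z i ⟶ X),
      JointlyEpi φ ∧
        ∀ i, (∃ c : C, Nonempty ((Z i).right ≅ (lSh J).obj c)) ∧
          (Nonempty (IsInitial ((Z i).left)) ∨
            ∃ d : D, Nonempty ((Z i).left ≅ (lSh K).obj d)) :=
  comma_cover_by_generators_general K J p X
end

section
/- Let (𝒟,K) and (𝒞,J) be small sites and p : 𝒟 ⥤ 𝒞 a comorphism of sites. Assume 𝒟 has an initial object 0 such that p(0) is initial in 𝒞, the empty sieve on 0 is K-covering, and the empty sieve on p(0) is J-covering. On the comma category Comma p (𝟭 𝒞), whose objects are triples (d, c, u : p(d) ⟶ c), declare a sieve S on an object (d, c, u) to be covering if and only if the image (pushforward) sieve of S along the first projection to 𝒟 is K-covering on d and the image sieve of S along the second projection to 𝒞 is J-covering on c. Then this assignment defines a Grothendieck topology (K/J) on Comma p (𝟭 𝒞). -/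
/-!
Both projections out of `Comma p (𝟭 C)` are right adjoints: `fst` has left adjoint
`d ↦ (d, p d, 𝟙)`, and `snd` has left adjoint `c ↦ (O, c, !)` since `O` and `p O` are initial.
Along a right adjoint `G`, an arrow lies in the image sieve of `S` iff its adjoint transpose lies
in `S`, so taking image sieves commutes with pullback. Hence for any topology `K` the sieves whose
image along `G` is `K`-covering form a topology, and `K/J` is the meet of the two topologies
obtained from `fst` and `snd`.
-/

open CategoryTheory Limits

namespace CategoryTheory

variable {A B : Type*} [Category A] [Category B]

lemma Sieve.functorPushforward_apply_iff_of_adjunction {L : B ⥤ A} {G : A ⥤ B} (adj : L ⊣ G)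
    {X : A} (S : Sieve X) {Y : B} (g : Y ⟶ G.obj X) :
    S.functorPushforward G g ↔ S ((adj.homEquiv Y X).symm g) := by
  constructor
  · rintro ⟨Z, t, h, ht, rfl⟩
    rw [adj.homEquiv_naturality_right_symm]
    exact S.downward_closed ht _
  · intro hg
    exact ⟨_, _, adj.unit.app Y, hg, by rw [← Adjunction.homEquiv_unit, Equiv.apply_symm_apply]⟩

lemma Sieve.functorPushforward_pullback_of_isRightAdjoint (G : A ⥤ B) [G.IsRightAdjoint]
    {X Y : A} (f : Y ⟶ X) (S : Sieve X) :
    (S.pullback f).functorPushforward G = (S.functorPushforward G).pullback (G.map f) := by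
  ext Z g
  simp only [Sieve.pullback_apply,
    Sieve.functorPushforward_apply_iff_of_adjunction (Adjunction.ofIsRightAdjoint G),
    Adjunction.homEquiv_naturality_right_symm]

namespace GrothendieckTopology

def comap (G : A ⥤ B) [G.IsRightAdjoint] (K : GrothendieckTopology B) :
    GrothendieckTopology A where
  sieves X := {S | S.functorPushforward G ∈ K (G.obj X)}
  top_mem' X := by
    rw [Set.mem_ofPred_eq, Sieve.functorPushforward_top]
    exact K.top_mem _
  pullback_stable' X Y S f hS := by
    rw [Set.mem_ofPred_eq, Sieve.functorPushforward_pullback_of_isRightAdjoint]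
    exact K.pullback_stable _ hS
  transitive' X S hS R hR := by
    refine K.transitive hS _ ?_
    rintro Z _ ⟨W, t, h, ht, rfl⟩
    rw [Sieve.pullback_comp, ← Sieve.functorPushforward_pullback_of_isRightAdjoint]
    exact K.pullback_stable h (hR ht)

lemma mem_inf_iff (J₁ J₂ : GrothendieckTopology A) {X : A} (S : Sieve X) :
    S ∈ (J₁ ⊓ J₂) X ↔ S ∈ J₁ X ∧ S ∈ J₂ X := by
  change S ∈ sInf {J₁, J₂} X ↔ _
  rw [mem_sInf]
  simp

end GrothendieckTopology

namespace Comma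

variable {D C : Type*} [Category D] [Category C]

def fstHomEquiv (p : D ⥤ C) (d : D) (X : Comma p (𝟭 C)) :
    ((⟨d, p.obj d, 𝟙 _⟩ : Comma p (𝟭 C)) ⟶ X) ≃ (d ⟶ X.left) where
  toFun f := f.left
  invFun g := ⟨g, p.map g ≫ X.hom, by simp⟩
  left_inv f := by
    ext
    · rfl
    · simp
  right_inv _ := rfl

instance (p : D ⥤ C) : (fst p (𝟭 C)).IsRightAdjoint :=
  ⟨_, ⟨Adjunction.adjunctionOfEquivLeft (fstHomEquiv p) fun _ _ _ _ _ => rfl⟩⟩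

variable {E : Type*} [Category E] (L : D ⥤ C) (R : E ⥤ C) {O : D}

def sndHomEquiv (hO : IsInitial O) (hLO : IsInitial (L.obj O)) (e : E) (X : Comma L R) :
    ((⟨O, e, hLO.to (R.obj e)⟩ : Comma L R) ⟶ X) ≃ (e ⟶ X.right) where
  toFun f := f.right
  invFun g := ⟨hO.to X.left, g, hLO.hom_ext _ _⟩
  left_inv f := by
    ext
    · exact hO.hom_ext _ _
    · rfl
  right_inv _ := rfl

lemma isRightAdjoint_snd_of_isInitial (hO : IsInitial O) (hLO : IsInitial (L.obj O)) :
    (snd L R).IsRightAdjoint :=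
  ⟨_, ⟨Adjunction.adjunctionOfEquivLeft (sndHomEquiv L R hO hLO) fun _ _ _ _ _ => rfl⟩⟩

end Comma

end CategoryTheory

theorem exists_grothendieckTopology_on_comma_general
    {D : Type*} [Category D] {C : Type*} [Category C] (p : D ⥤ C)
    (K : GrothendieckTopology D) (J : GrothendieckTopology C)
    (O : D) (hO : IsInitial O) (hpO : IsInitial (p.obj O)) :
    ∃ T : GrothendieckTopology (Comma p (𝟭 C)),
      ∀ (X : Comma p (𝟭 C)) (S : Sieve X),
        S ∈ T X ↔
          (S.functorPushforward (Comma.fst p (𝟭 C)) ∈ K X.left ∧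
            S.functorPushforward (Comma.snd p (𝟭 C)) ∈ J X.right) := by
  have := Comma.isRightAdjoint_snd_of_isInitial p (𝟭 C) hO hpO
  exact ⟨K.comap (Comma.fst p (𝟭 C)) ⊓ J.comap (Comma.snd p (𝟭 C)),
    fun X S => GrothendieckTopology.mem_inf_iff _ _ S⟩

/-- Given a comorphism of sites `p : (𝒟,K) ⟶ (𝒞,J)` such that `𝒟` has an initial object `O`
with `p(O)` initial, the empty sieve on `O` being `K`-covering and the empty sieve on `p(O)`
being `J`-covering, declaring a sieve on an object of `Comma p (𝟭 𝒞)` to be covering iff its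
image sieves under the two projections are `K`- resp. `J`-covering defines a Grothendieck
topology on `Comma p (𝟭 𝒞)`. -/
theorem exists_grothendieckTopology_on_comma
    {D : Type*} [Category D] {C : Type*} [Category C] (p : D ⥤ C)
    (K : GrothendieckTopology D) (J : GrothendieckTopology C)
    (hp : IsComorphismOfSites p K J)
    (O : D) (hO : IsInitial O) (hpO : IsInitial (p.obj O))
    (hK0 : (⊥ : Sieve O) ∈ K O) (hJ0 : (⊥ : Sieve (p.obj O)) ∈ J (p.obj O)) :
    ∃ T : GrothendieckTopology (Comma p (𝟭 C)),
      ∀ (X : Comma p (𝟭 C)) (S : Sieve X),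
        S ∈ T X ↔
          (S.functorPushforward (Comma.fst p (𝟭 C)) ∈ K X.left ∧
            S.functorPushforward (Comma.snd p (𝟭 C)) ∈ J X.right) :=
  exists_grothendieckTopology_on_comma_general p K J O hO hpO
end

section
/- Let (𝒟,K) and (𝒞,J) be small sites and p : 𝒟 ⥤ 𝒞 a comorphism of sites; assume 𝒟 has an initial object 0 such that p(0) is initial in 𝒞, the empty sieve on 0 is K-covering, and the empty sieve on p(0) is J-covering; let (K/J) be the Grothendieck topology on Comma p (𝟭 𝒞) in which a sieve is covering iff its image sieves under the two projections are K-covering and J-covering respectively. Then the second projection functor π : Comma p (𝟭 𝒞) ⥤ 𝒞 is a comorphism of sites from (Comma p (𝟭 𝒞), (K/J)) to (𝒞, J); in particular, for every object (d, c, u) and every J-covering sieve S on c, there is a (K/J)-covering sieve R on (d, c, u) whose image sieve under π is contained in S. -/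
open CategoryTheory Limits

/-- Given a comorphism of sites `p : (𝒟,K) ⟶ (𝒞,J)` with suitable initial objects, and the
topology `(K/J)` on `Comma p (𝟭 𝒞)` whose covering sieves are those with `K`-covering and
`J`-covering image sieves under the two projections, the second projection is a comorphism
of sites towards `(𝒞, J)`; in particular, every `J`-covering sieve `S` on the second
component of an object is refined by the image under the second projection of some
`(K/J)`-covering sieve. -/
theorem comma_snd_isComorphism
    {D : Type*} [Category D] {C : Type*} [Category C] (p : D ⥤ C)
    (K : GrothendieckTopology D) (J : GrothendieckTopology C)
    (hp : IsComorphismOfSites p K J)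
    (O : D) (hO : IsInitial O) (hpO : IsInitial (p.obj O))
    (hK0 : (⊥ : Sieve O) ∈ K O) (hJ0 : (⊥ : Sieve (p.obj O)) ∈ J (p.obj O))
    (T : GrothendieckTopology (Comma p (𝟭 C)))
    (hT : ∀ (X : Comma p (𝟭 C)) (S : Sieve X),
      S ∈ T X ↔
        (S.functorPushforward (Comma.fst p (𝟭 C)) ∈ K X.left ∧
          S.functorPushforward (Comma.snd p (𝟭 C)) ∈ J X.right)) :
    IsComorphismOfSites (Comma.snd p (𝟭 C)) T J ∧
      ∀ (X : Comma p (𝟭 C)) (S : Sieve X.right), S ∈ J X.right →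
        ∃ R : Sieve X, R ∈ T X ∧ R.functorPushforward (Comma.snd p (𝟭 C)) ≤ S := by

  have key : ∀ (X : Comma p (𝟭 C)) (S : Sieve X.right), S ∈ J X.right →
      S.functorPullback (Comma.snd p (𝟭 C)) ∈ T X := by
    intro X S hS
    rw [hT]
    constructor
    · refine K.superset_covering ?_ (hp X.left (S.pullback X.hom) (J.pullback_stable X.hom hS))
      intro d' g hg
      exact ⟨{ left := d', right := p.obj d', hom := 𝟙 _ },
        { left := g, right := p.map g ≫ X.hom, w := by simp }, 𝟙 d', hg, by simp⟩
    · refine J.superset_covering ?_ hS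
      intro c' f hf
      refine ⟨{ left := O, right := c', hom := hpO.to c' },
        { left := hO.to X.left, right := f, w := hpO.hom_ext _ _ }, 𝟙 c', hf, by simp⟩
  refine ⟨fun X S hS => key X S hS, fun X S hS => ⟨S.functorPullback (Comma.snd p (𝟭 C)), key X S hS, ?_⟩⟩
  rintro Z f ⟨W, g, e, hg, rfl⟩
  exact S.downward_closed hg e
end

section
/- Let 𝒟 be a small category with Grothendieck topology K, 𝒞 a category, p : 𝒟 ⥤ 𝒞 a functor, and f : d' ⟶ d a morphism of 𝒟. Let P be the presheaf on 𝒟 given by the pullback, in presheaves of types on 𝒟, of the morphism Hom_𝒟(−, d) ⟶ Hom_𝒞(p(−), p(d)), g ↦ p(g), along the morphism Hom_𝒞(p(−), p(d')) ⟶ Hom_𝒞(p(−), p(d)), h ↦ p(f) ∘ h (so P(e) = {(g : e ⟶ d, h : p(e) ⟶ p(d')) | p(f) ∘ h = p(g)}), and let θ : Hom_𝒟(−, d') ⟶ P be the morphism of presheaves sending u to (f ∘ u, p(u)). Then the K-sheafification of θ is an isomorphism if and only if f is K-locally cartesian. -/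
/-!
By `GrothendieckTopology.W_iff_isLocallyBijective`, sheafification inverts `θ` iff `θ` is locally
injective and locally surjective. Two sections `u, u'` of `Hom(−, d')` have the same image under
`θ` iff `u ≫ f = u' ≫ f` and `p u = p u'`, so local injectivity of `θ` is clause (ii) of local
cartesianness. A section `t` satisfies `θ t = (v ≫ g, p v ≫ h)` iff `t` is a lift of `(g, h)` along
`v` as in clause (i), so the image sieve of `(g, h)` is the sieve of such `v`, and local
surjectivity of `θ` is clause (i).
-/

open CategoryTheory Limits

universe u

def LocallyCartesian {D : Type*} [Category D] {C : Type*} [Category C]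
    (K : GrothendieckTopology D) (p : D ⥤ C) {d' d : D} (f : d' ⟶ d) : Prop :=
  (∀ (d'' : D) (g : d'' ⟶ d) (h : p.obj d'' ⟶ p.obj d'),
      h ≫ p.map f = p.map g →
      ∃ S : Sieve d'', S ∈ K d'' ∧
        ∀ {e : D} (v : e ⟶ d''), S.arrows v →
          ∃ hv : e ⟶ d', p.map v ≫ h = p.map hv ∧ hv ≫ f = v ≫ g) ∧
  (∀ (d'' : D) (h h' : d'' ⟶ d'), h ≫ f = h' ≫ f → p.map h = p.map h' →
      ∃ S : Sieve d'', S ∈ K d'' ∧ ∀ {e : D} (v : e ⟶ d''), S.arrows v → v ≫ h = v ≫ h')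

variable {D C : Type u} [SmallCategory D] [SmallCategory C]

/-- The pullback presheaf `P` on `𝒟` with
`P(e) = {(g : e ⟶ d, h : p(e) ⟶ p(d')) | p(f) ∘ h = p(g)}`. -/
def pbPresheaf (p : D ⥤ C) {d' d : D} (f : d' ⟶ d) : Dᵒᵖ ⥤ Type u where
  obj e := { gh : (e.unop ⟶ d) × (p.obj e.unop ⟶ p.obj d') // gh.2 ≫ p.map f = p.map gh.1 }
  map w := TypeCat.ofHom fun x => ⟨(w.unop ≫ x.1.1, p.map w.unop ≫ x.1.2), by
    rw [Category.assoc, x.2, ← p.map_comp]⟩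
  map_id := by intro e; ext x <;> simp
  map_comp := by intro e e' e'' w w'; ext x <;> simp

/-- The comparison morphism `θ : Hom(−, d') ⟶ P`, `u ↦ (f ∘ u, p(u))`. -/
def thetaCompare (p : D ⥤ C) {d' d : D} (f : d' ⟶ d) :
    yoneda.obj d' ⟶ pbPresheaf p f where
  app e := TypeCat.ofHom fun u => ⟨(u ≫ f, p.map u), (p.map_comp u f).symm⟩
  naturality := by intro e e' w; ext u <;> simp [pbPresheaf]

lemma CategoryTheory.GrothendieckTopology.exists_mem_le_iff_mem {E : Type*} [Category E]
    (K : GrothendieckTopology E) {X : E} (S : Sieve X) :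
    (∃ T : Sieve X, T ∈ K X ∧ ∀ {Y : E} (v : Y ⟶ X), T.arrows v → S.arrows v) ↔ S ∈ K X :=
  ⟨fun ⟨_, hT, hTS⟩ => K.superset_covering (fun _ v hv => hTS v hv) hT,
    fun hS => ⟨S, hS, fun _ => id⟩⟩

lemma thetaCompare_app_eq_iff {p : D ⥤ C} {d' d : D} {f : d' ⟶ d} {e : Dᵒᵖ}
    (t : e.unop ⟶ d') (x : (pbPresheaf p f).obj e) :
    (thetaCompare p f).app e t = x ↔ t ≫ f = x.1.1 ∧ p.map t = x.1.2 :=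
  ⟨fun h => ⟨congrArg (·.1.1) h, congrArg (·.1.2) h⟩, fun ⟨h₁, h₂⟩ => Subtype.ext (Prod.ext h₁ h₂)⟩

section

variable (K : GrothendieckTopology D) (p : D ⥤ C) {d' d : D} (f : d' ⟶ d)

lemma thetaCompare_isLocallyInjective_iff :
    Presheaf.IsLocallyInjective K (thetaCompare p f) ↔
      ∀ (d'' : D) (h h' : d'' ⟶ d'), h ≫ f = h' ≫ f → p.map h = p.map h' →
        ∃ S : Sieve d'', S ∈ K d'' ∧ ∀ {e : D} (v : e ⟶ d''), S.arrows v → v ≫ h = v ≫ h' := by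
  refine ⟨fun _ d'' h h' hf hp => ?_, fun H => ⟨fun {X} u u' huu' => ?_⟩⟩
  · refine (K.exists_mem_le_iff_mem
      (Presheaf.equalizerSieve (F := yoneda.obj d') (X := Opposite.op d'') h h')).2 ?_
    exact Presheaf.equalizerSieve_mem K (thetaCompare p f) h h'
      ((thetaCompare_app_eq_iff h _).2 ⟨hf, hp⟩)
  · obtain ⟨hf, hp⟩ := (thetaCompare_app_eq_iff u _).1 huu'
    exact (K.exists_mem_le_iff_mem _).1 (H X.unop u u' hf hp)

lemma thetaCompare_isLocallySurjective_iff :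
    Presheaf.IsLocallySurjective K (thetaCompare p f) ↔
      ∀ (d'' : D) (g : d'' ⟶ d) (h : p.obj d'' ⟶ p.obj d'), h ≫ p.map f = p.map g →
        ∃ S : Sieve d'', S ∈ K d'' ∧ ∀ {e : D} (v : e ⟶ d''), S.arrows v →
          ∃ hv : e ⟶ d', p.map v ≫ h = p.map hv ∧ hv ≫ f = v ≫ g := by
  refine ⟨fun _ d'' g h hgh => ?_, fun H => ⟨fun {U} x => ?_⟩⟩
  · refine ⟨Presheaf.imageSieve (thetaCompare p f) (⟨(g, h), hgh⟩ : (pbPresheaf p f).obj _),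
      Presheaf.imageSieve_mem K _ _, fun v ⟨t, ht⟩ => ?_⟩
    obtain ⟨hf, hp⟩ := (thetaCompare_app_eq_iff t _).1 ht
    exact ⟨t, hp.symm, hf⟩
  · obtain ⟨S, hS, hSv⟩ := H U x.1.1 x.1.2 x.2
    refine (K.exists_mem_le_iff_mem _).1 ⟨S, hS, fun v hv => ?_⟩
    obtain ⟨t, hp, hf⟩ := hSv v hv
    exact ⟨t, (thetaCompare_app_eq_iff t _).2 ⟨hf, hp.symm⟩⟩

end

/-- The `K`-sheafification of `θ` is an isomorphism iff `f` is `K`-locally cartesian. -/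
theorem sheafify_theta_isIso_iff_locallyCartesian
    (K : GrothendieckTopology D) (p : D ⥤ C) {d' d : D} (f : d' ⟶ d) :
    IsIso ((presheafToSheaf K (Type u)).map (thetaCompare p f)) ↔
      LocallyCartesian K p f := by
  rw [← K.W_iff, K.W_iff_isLocallyBijective, thetaCompare_isLocallyInjective_iff,
    thetaCompare_isLocallySurjective_iff, LocallyCartesian, and_comm]
end

section
/- Let p : 𝒟 ⥤ 𝒞 be a comorphism of sites from (𝒟,K) to (𝒞,J) such that 𝒟 has finite limits and p preserves finite limits. Then a morphism f : d' ⟶ d of 𝒟 is K-locally cartesian if and only if there exists a family of morphisms (u_i : d_i ⟶ d)_{i∈I} generating a K-covering sieve on d such that for every i, the pullback projection of f along u_i (i.e., the morphism d' ×_d d_i ⟶ d_i) is K-locally cartesian. -/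
/-
Since `p` preserves pullbacks, a lift against `pullback.snd f u` is the same as a lift against `f`
with prescribed composite with `u`; so local cartesianness is stable under pullback, and the
forward direction uses the identity family. Conversely, the sieve of arrows along which the
required lift for `f` exists (resp. along which two maps agree) becomes covering when pulled back
along any arrow factoring through some `u i`, hence is covering by the local character of `K`.
-/

open CategoryTheory Limits

namespace CategoryTheory.GrothendieckTopology

variable {D : Type*} [Category D] (K : GrothendieckTopology D)

lemma mem_of_pullback_mem_of_factors_through_ofArrows {X Y : D} (g : X ⟶ Y) {ι : Type*}
    {Y' : ι → D} {u : ∀ i, Y' i ⟶ Y} (hu : Sieve.generate (Presieve.ofArrows Y' u) ∈ K Y)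
    (R : Sieve X)
    (hR : ∀ i {Z : D} (v : Z ⟶ X) (l : Z ⟶ Y' i), v ≫ g = l ≫ u i → R.pullback v ∈ K Z) :
    R ∈ K X := by
  refine K.transitive (K.pullback_stable g hu) R ?_
  rintro Z v ⟨_, l, _, ⟨i⟩, hvg⟩
  exact hR i v l hvg.symm

end CategoryTheory.GrothendieckTopology

namespace LocallyCartesian

variable {D : Type*} [Category D] {C : Type*} [Category C]
  {K : GrothendieckTopology D} {p : D ⥤ C}

section MapPullback

variable (p) {d' d e : D} (f : d' ⟶ d) (u : e ⟶ d) [HasPullback f u]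
  [PreservesLimit (cospan f u) p]

lemma map_pullback_hom_ext {Z : C} {a b : Z ⟶ p.obj (pullback f u)}
    (h₁ : a ≫ p.map (pullback.fst f u) = b ≫ p.map (pullback.fst f u))
    (h₂ : a ≫ p.map (pullback.snd f u) = b ≫ p.map (pullback.snd f u)) : a = b :=
  PullbackCone.IsLimit.hom_ext (isLimitOfHasPullbackOfPreservesLimit p f u) h₁ h₂

lemma exists_map_pullback_lift {Z : C} (a : Z ⟶ p.obj d') (b : Z ⟶ p.obj e)
    (w : a ≫ p.map f = b ≫ p.map u) :
    ∃ t : Z ⟶ p.obj (pullback f u),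
      t ≫ p.map (pullback.fst f u) = a ∧ t ≫ p.map (pullback.snd f u) = b :=
  let t := PullbackCone.IsLimit.lift' (isLimitOfHasPullbackOfPreservesLimit p f u) a b w
  ⟨t.1, t.2⟩

end MapPullback

theorem pullback_snd {d' d e : D} {f : d' ⟶ d} (hf : LocallyCartesian K p f) (u : e ⟶ d)
    [HasPullback f u] [PreservesLimit (cospan f u) p] :
    LocallyCartesian K p (pullback.snd f u) := by
  constructor
  · intro d'' g h hh
    obtain ⟨S, hS, hlift⟩ := hf.1 d'' (g ≫ u) (h ≫ p.map (pullback.fst f u)) (by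
      rw [Category.assoc, ← p.map_comp, pullback.condition, p.map_comp, reassoc_of% hh,
        p.map_comp])
    refine ⟨S, hS, fun v hv => ?_⟩
    obtain ⟨k, hk, hkf⟩ := hlift v hv
    refine ⟨pullback.lift k (v ≫ g) (by rw [hkf, Category.assoc]), ?_, pullback.lift_snd _ _ _⟩
    apply map_pullback_hom_ext p f u
    · rw [Category.assoc, hk, ← p.map_comp, pullback.lift_fst]
    · rw [Category.assoc, hh, ← p.map_comp, ← p.map_comp, pullback.lift_snd]
  · intro d'' h h' he hph
    obtain ⟨S, hS, heq⟩ := hf.2 d'' (h ≫ pullback.fst f u) (h' ≫ pullback.fst f u)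
      (by simp only [Category.assoc, pullback.condition, reassoc_of% he])
      (by rw [p.map_comp, p.map_comp, hph])
    refine ⟨S, hS, fun v hv => pullback.hom_ext ?_ ?_⟩
    · simpa using heq v hv
    · simp only [Category.assoc, he]

theorem of_pullback_snd {d' d : D} {f : d' ⟶ d} {ι : Type*} {di : ι → D} {u : ∀ i, di i ⟶ d}
    (hu : Sieve.generate (Presieve.ofArrows di u) ∈ K d) [∀ i, HasPullback f (u i)]
    [∀ i, PreservesLimit (cospan f (u i)) p]
    (hcart : ∀ i, LocallyCartesian K p (pullback.snd f (u i))) :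
    LocallyCartesian K p f := by
  constructor
  · intro d'' g h hh
    let R : Sieve d'' :=
      { arrows := fun _ v => ∃ hv, p.map v ≫ h = p.map hv ∧ hv ≫ f = v ≫ g
        downward_closed := by
          rintro _ _ v ⟨hv, h₁, h₂⟩ w
          exact ⟨w ≫ hv, by simp [h₁], by simp [h₂]⟩ }
    refine ⟨R, K.mem_of_pullback_mem_of_factors_through_ofArrows g hu R ?_, fun v hv => hv⟩
    intro i e v l hvl
    obtain ⟨t, ht₁, ht₂⟩ := exists_map_pullback_lift p f (u i) (p.map v ≫ h) (p.map l)
      (by rw [Category.assoc, hh, ← p.map_comp, hvl, p.map_comp])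
    obtain ⟨S, hS, hlift⟩ := (hcart i).1 e l t ht₂
    refine K.superset_covering (fun e' w hw => ?_) hS
    obtain ⟨k, hk, hkl⟩ := hlift w hw
    refine ⟨k ≫ pullback.fst f (u i), ?_, ?_⟩
    · rw [p.map_comp, p.map_comp, Category.assoc, ← ht₁, reassoc_of% hk]
    · rw [Category.assoc, pullback.condition, reassoc_of% hkl, ← hvl, Category.assoc]
  · intro d'' h h' he hph
    let R : Sieve d'' :=
      { arrows := fun _ v => v ≫ h = v ≫ h'
        downward_closed := fun {_ _ _} hv w => by simp only [Category.assoc, hv] }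
    refine ⟨R, K.mem_of_pullback_mem_of_factors_through_ofArrows (h ≫ f) hu R ?_,
      fun v hv => hv⟩
    intro i e v l hvl
    have w : (v ≫ h) ≫ f = l ≫ u i := by rw [Category.assoc, hvl]
    have w' : (v ≫ h') ≫ f = l ≫ u i := by rw [Category.assoc, ← he, hvl]
    obtain ⟨S, hS, heq⟩ := (hcart i).2 e (pullback.lift _ _ w) (pullback.lift _ _ w')
      (by simp only [pullback.lift_snd])
      (map_pullback_hom_ext p f (u i)
        (by rw [← p.map_comp, ← p.map_comp, pullback.lift_fst, pullback.lift_fst, p.map_comp,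
          p.map_comp, hph])
        (by simp only [← p.map_comp, pullback.lift_snd]))
    refine K.superset_covering (fun e' x hx => ?_) hS
    show (x ≫ v) ≫ h = (x ≫ v) ≫ h'
    simpa only [Category.assoc, pullback.lift_fst] using heq x hx =≫ pullback.fst f (u i)

end LocallyCartesian

theorem locallyCartesian_iff_K_cartesian_general
    {D : Type*} [Category D] {C : Type*} [Category C] (p : D ⥤ C)
    (K : GrothendieckTopology D)
    [HasFiniteLimits D] [PreservesFiniteLimits p]
    {d' d : D} (f : d' ⟶ d) :
    LocallyCartesian K p f ↔
      ∃ (ι : Type*) (di : ι → D) (u : ∀ i, di i ⟶ d),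
        Sieve.generate (Presieve.ofArrows di u) ∈ K d ∧
          ∀ i, LocallyCartesian K p (pullback.snd f (u i)) := by
  refine ⟨fun hf => ⟨PUnit, fun _ => d, fun _ => 𝟙 d, ?_, fun _ => hf.pullback_snd _⟩,
    fun ⟨_, _, _, hu, hcart⟩ => LocallyCartesian.of_pullback_snd hu hcart⟩
  rw [Sieve.generate_of_contains_isSplitEpi (𝟙 d) (Presieve.ofArrows.mk PUnit.unit)]
  exact K.top_mem d

/-- For a finite-limit-preserving comorphism of sites `p : (𝒟,K) ⟶ (𝒞,J)` with `𝒟` having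
finite limits, a morphism is `K`-locally cartesian iff its pullbacks along some `K`-covering
family are `K`-locally cartesian. -/
theorem locallyCartesian_iff_K_cartesian
    {D : Type*} [Category D] {C : Type*} [Category C] (p : D ⥤ C)
    (K : GrothendieckTopology D) (J : GrothendieckTopology C)
    (hp : IsComorphismOfSites p K J)
    [HasFiniteLimits D] [PreservesFiniteLimits p]
    {d' d : D} (f : d' ⟶ d) :
    LocallyCartesian K p f ↔
      ∃ (ι : Type*) (di : ι → D) (u : ∀ i, di i ⟶ d),
        Sieve.generate (Presieve.ofArrows di u) ∈ K d ∧
          ∀ i, LocallyCartesian K p (pullback.snd f (u i)) :=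
  locallyCartesian_iff_K_cartesian_general p K f
end

section
/- Let F : 𝒟 ⥤ 𝒞 be a functor with a right adjoint G : 𝒞 ⥤ 𝒟, with adjunction unit η (whose component at an object x of 𝒟 is η_x : x ⟶ G(F(x))). Then a morphism f : d' ⟶ d of 𝒟 is cartesian for F if and only if the naturality square with sides f : d' ⟶ d, η_{d'} : d' ⟶ G(F(d')), η_d : d ⟶ G(F(d)), and G(F(f)) : G(F(d')) ⟶ G(F(d)) is a pullback square in 𝒟. -/
open CategoryTheory Limits

/-- For a left adjoint `F` with right adjoint `G` and unit `η`, a morphism `f : d' ⟶ d`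
is cartesian for `F` iff its unit naturality square is a pullback. -/
theorem cartesian_for_leftAdjoint_iff_isPullback
    {D : Type*} [Category D] {C : Type*} [Category C]
    (F : D ⥤ C) (G : C ⥤ D) (adj : F ⊣ G) {d' d : D} (f : d' ⟶ d) :
    IsCartesianFor F f ↔
      IsPullback f (adj.unit.app d') (adj.unit.app d) (G.map (F.map f)) := by
  have nat : ∀ {x y : D} (m : x ⟶ y),
      m ≫ adj.unit.app y = adj.unit.app x ≫ G.map (F.map m) := by
    intro x y m; simpa using (adj.unit.naturality m).symm
  have he : ∀ {x : D} {y : C} (m : x ⟶ G.obj y) (u : F.obj x ⟶ y),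
      (adj.unit.app x ≫ G.map u = m) ↔ u = (adj.homEquiv x y).symm m := by
    intro x y m u
    rw [Equiv.eq_symm_apply, adj.homEquiv_unit]
  constructor
  · intro hc
    have hlift : ∀ (x : D) (a : x ⟶ d) (b : x ⟶ G.obj (F.obj d'))
        (_ : a ≫ adj.unit.app d = b ≫ G.map (F.map f)),
        ∃! l : x ⟶ d', l ≫ f = a ∧ l ≫ adj.unit.app d' = b := by
      intro x a b hab
      have hcomm : ((adj.homEquiv x (F.obj d')).symm b) ≫ F.map f = F.map a := by
        apply (adj.homEquiv x (F.obj d)).injective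
        rw [adj.homEquiv_unit, adj.homEquiv_unit, Functor.map_comp, ← Category.assoc,
          ← adj.homEquiv_unit, Equiv.apply_symm_apply, ← hab, nat a]
      obtain ⟨l, ⟨hl1, hl2⟩, hlu⟩ := hc a ((adj.homEquiv x (F.obj d')).symm b) hcomm
      refine ⟨l, ⟨hl2, ?_⟩, ?_⟩
      · rw [nat l, (he b (F.map l)).mpr hl1]
      · rintro y ⟨hy1, hy2⟩
        exact hlu y ⟨(he b (F.map y)).mp (by rw [← nat y, hy2]) ▸ rfl, hy1⟩
    refine IsPullback.of_isLimit (PullbackCone.IsLimit.mk (nat f) ?_ ?_ ?_ ?_)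
    · exact fun s => (hlift s.pt s.fst s.snd s.condition).choose
    · exact fun s => (hlift s.pt s.fst s.snd s.condition).choose_spec.1.1
    · exact fun s => (hlift s.pt s.fst s.snd s.condition).choose_spec.1.2
    · exact fun s m h1 h2 => (hlift s.pt s.fst s.snd s.condition).choose_spec.2 m ⟨h1, h2⟩
  · intro hp
    intro d'' g h hw
    have key : g ≫ adj.unit.app d = (adj.unit.app d'' ≫ G.map h) ≫ G.map (F.map f) := by
      rw [Category.assoc, ← G.map_comp, hw, nat g]
    refine ⟨hp.lift g (adj.unit.app d'' ≫ G.map h) key, ⟨?_, hp.lift_fst ..⟩, ?_⟩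
    · have := hp.lift_snd g (adj.unit.app d'' ≫ G.map h) key
      rw [nat] at this
      apply (adj.homEquiv d'' (F.obj d')).injective
      rw [adj.homEquiv_unit, adj.homEquiv_unit, this]
    · rintro y ⟨hy1, hy2⟩
      apply hp.hom_ext
      · rw [hp.lift_fst, hy2]
      · rw [hp.lift_snd, nat y, hy1]
end

section
/- Let F : 𝒟 ⥤ 𝒞 be a functor with a right adjoint G : 𝒞 ⥤ 𝒟, with unit η : 𝟭_𝒟 ⟶ F ⋙ G; for a morphism u : x ⟶ G(c) of 𝒟, write u^t : F(x) ⟶ c for its adjoint transpose. Let d be an object of 𝒟 and f : c ⟶ F(d) a morphism of 𝒞. Then f admits a cartesian lifting (i.e., there exist a cartesian morphism f̂ : d'' ⟶ d of 𝒟 and an isomorphism σ : F(d'') ≅ c with F(f̂) = f ∘ σ) if and only if there exists a pullback square in 𝒟, with vertex P and projections f̄ : P ⟶ d and q : P ⟶ G(c), of η_d : d ⟶ G(F(d)) along G(f) : G(c) ⟶ G(F(d)), such that the transpose q^t : F(P) ⟶ c is an isomorphism. -/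
open CategoryTheory Limits

private lemma homEquiv_map_aux {D : Type*} [Category D] {C : Type*} [Category C]
    {F : D ⥤ C} {G : C ⥤ D} (adj : F ⊣ G) {x y : D} (a : x ⟶ y) :
    adj.homEquiv x (F.obj y) (F.map a) = a ≫ adj.unit.app y := by
  rw [← Category.comp_id (F.map a), adj.homEquiv_naturality_left]
  simp [Adjunction.homEquiv_unit]

/-- For a left adjoint `F : 𝒟 ⥤ 𝒞` with right adjoint `G` and unit `η`, a morphism
`f : c ⟶ F(d)` admits a cartesian lifting iff there is a pullback of `η_d` along `G(f)`
whose projection to `G(c)` has invertible adjoint transpose. -/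
theorem cartesian_lifting_iff_pullback_transpose_iso
    {D : Type*} [Category D] {C : Type*} [Category C]
    (F : D ⥤ C) (G : C ⥤ D) (adj : F ⊣ G) (d : D) {c : C} (f : c ⟶ F.obj d) :
    (∃ (d'' : D) (fhat : d'' ⟶ d) (σ : F.obj d'' ≅ c),
        IsCartesianFor F fhat ∧ F.map fhat = σ.hom ≫ f) ↔
      (∃ (P : D) (fbar : P ⟶ d) (q : P ⟶ G.obj c),
        IsPullback fbar q (adj.unit.app d) (G.map f) ∧
          IsIso ((adj.homEquiv P c).symm q)) := by
  constructor
  · rintro ⟨d'', fhat, σ, hcart, hFf⟩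
    refine ⟨d'', fhat, adj.unit.app d'' ≫ G.map σ.hom, ?_, ?_⟩
    · have w : fhat ≫ adj.unit.app d = (adj.unit.app d'' ≫ G.map σ.hom) ≫ G.map f := by
        rw [← homEquiv_map_aux adj fhat, hFf, Adjunction.homEquiv_unit, G.map_comp,
          Category.assoc]
      have key : ∀ s : PullbackCone (adj.unit.app d) (G.map f),
          ((adj.homEquiv s.pt c).symm s.snd ≫ σ.inv) ≫ F.map fhat = F.map s.fst := by
        intro s
        apply (adj.homEquiv _ _).injective
        have base := homEquiv_map_aux adj s.fst
        simp only [Functor.id_obj] at base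
        rw [hFf, base]
        calc (adj.homEquiv s.pt (F.obj d))
              (((adj.homEquiv s.pt c).symm s.snd ≫ σ.inv) ≫ (σ.hom ≫ f))
            = (adj.homEquiv s.pt (F.obj d)) ((adj.homEquiv s.pt c).symm s.snd ≫ f) := by
              congr 1; simp
          _ = s.snd ≫ G.map f := by
              rw [adj.homEquiv_naturality_right, Equiv.apply_symm_apply]
          _ = s.fst ≫ adj.unit.app d := s.condition.symm
      refine IsPullback.of_isLimit (c := PullbackCone.mk fhat (adj.unit.app d'' ≫ G.map σ.hom) w)
        (PullbackCone.IsLimit.mk w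
          (fun s => (hcart s.fst _ (key s)).choose) ?_ ?_ ?_)
      · intro s
        exact (hcart s.fst _ (key s)).choose_spec.1.2
      · intro s
        set l := (hcart s.fst _ (key s)).choose with hl
        have hFl : F.map l = (adj.homEquiv s.pt c).symm s.snd ≫ σ.inv :=
          (hcart s.fst _ (key s)).choose_spec.1.1
        show l ≫ (adj.unit.app d'' ≫ G.map σ.hom) = s.snd
        apply (adj.homEquiv s.pt c).symm.injective
        rw [Equiv.symm_apply_eq]
        have : adj.unit.app d'' ≫ G.map σ.hom = adj.homEquiv d'' c σ.hom := by
          rw [Adjunction.homEquiv_unit]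
        rw [this, ← adj.homEquiv_naturality_left, hFl]
        congr 1; simp
      · intro s m hm1 hm2
        apply (hcart s.fst _ (key s)).choose_spec.2
        refine ⟨?_, hm1⟩
        have : (adj.homEquiv s.pt c) (F.map m ≫ σ.hom) = s.snd := by
          rw [adj.homEquiv_naturality_left, Adjunction.homEquiv_unit, ← Category.assoc]
          simpa using hm2
        have h2 : F.map m ≫ σ.hom = (adj.homEquiv s.pt c).symm s.snd := by
          rw [← this, Equiv.symm_apply_apply]
        rw [← h2]; simp
    · -- transpose of q is σ.hom, an iso
      have : (adj.homEquiv d'' c).symm (adj.unit.app d'' ≫ G.map σ.hom) = σ.hom := by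
        apply (adj.homEquiv _ _).injective
        rw [Equiv.apply_symm_apply, Adjunction.homEquiv_unit]
      rw [this]
      infer_instance
  · rintro ⟨P, fbar, q, pb, hiso⟩
    set t : F.obj P ⟶ c := (adj.homEquiv P c).symm q with ht
    have hq : (adj.homEquiv P c) t = q := by rw [ht, Equiv.apply_symm_apply]
    have hF : F.map fbar = t ≫ f := by
      apply (adj.homEquiv _ _).injective
      rw [homEquiv_map_aux adj fbar, adj.homEquiv_naturality_right, hq]
      exact pb.w
    refine ⟨P, fbar, asIso t, ?_, hF⟩
    intro X g h hcomm
    set b : X ⟶ G.obj c := (adj.homEquiv X c) (h ≫ t) with hb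
    have cone : g ≫ adj.unit.app d = b ≫ G.map f := by
      rw [hb, ← adj.homEquiv_naturality_right, Category.assoc, ← hF, hcomm,
        homEquiv_map_aux adj g]
    refine ⟨pb.lift g b cone, ⟨?_, pb.lift_fst g b cone⟩, ?_⟩
    · have hc : pb.lift g b cone ≫ q = b := pb.lift_snd g b cone
      have : F.map (pb.lift g b cone) ≫ t = h ≫ t := by
        apply (adj.homEquiv _ _).injective
        rw [adj.homEquiv_naturality_left, hq, hc, hb]
      exact (cancel_mono t).mp this
    · rintro m ⟨hFm, hmf⟩
      apply pb.hom_ext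
      · rw [pb.lift_fst, hmf]
      · rw [pb.lift_snd]
        have : (adj.homEquiv X c) (F.map m ≫ t) = m ≫ q := by
          rw [adj.homEquiv_naturality_left, hq]
        rw [← this, hFm, hb]
end

section
/- Let (𝒞,J) and (𝒟,K) be small sites, ℰ = Sheaf J and ℱ = Sheaf K the corresponding categories of Type-valued sheaves. Let f^* : ℰ ⥤ ℱ be a functor preserving finite limits which has a right adjoint f_* and a left adjoint f_! (so f_! ⊣ f^* ⊣ f_*, the data of an essential geometric morphism f : ℱ ⟶ ℰ). Then the following are equivalent: (a) f is locally connected, i.e., for every morphism u : E' ⟶ E of ℰ, every object F of ℱ and every morphism α : F ⟶ f^*(E), the canonical comparison morphism f_!(F ×_{f^*(E)} f^*(E')) ⟶ f_!(F) ×_E E' — whose first component is f_! applied to the first pullback projection and whose second component is the adjoint transpose of the second pullback projection F ×_{f^*(E)} f^*(E') ⟶ f^*(E') — is an isomorphism; (b) f_! : ℱ ⥤ ℰ is a fibration in the Street sense. -/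
open CategoryTheory Limits

universe u

/-- The canonical comparison morphism `f_!(F ×_{f^*(E)} f^*(E')) ⟶ f_!(F) ×_E E'` associated
to an adjunction `f_! ⊣ f^*`, a morphism `u : E' ⟶ E` and a morphism `α : F ⟶ f^*(E)`:
its first component is `f_!` applied to the first pullback projection and its second
component is the adjoint transpose of the second pullback projection. -/
noncomputable def localConnComparison {E F : Type*} [Category E] [Category F]
    [HasPullbacks E] [HasPullbacks F]
    (fStar : E ⥤ F) (fShriek : F ⥤ E) (adj : fShriek ⊣ fStar)
    {E' E'' : E} (u : E' ⟶ E'') (X : F) (α : X ⟶ fStar.obj E'') :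
    fShriek.obj (pullback α (fStar.map u)) ⟶
      pullback ((adj.homEquiv X E'').symm α) u :=
  pullback.lift (fShriek.map (pullback.fst α (fStar.map u)))
    ((adj.homEquiv _ _).symm (pullback.snd α (fStar.map u)))
    (by
      rw [← Adjunction.homEquiv_naturality_left_symm,
        ← Adjunction.homEquiv_naturality_right_symm, pullback.condition])

section Aux

variable {E F : Type*} [Category E] [Category F] [HasPullbacks E] [HasPullbacks F]
  (fStar : E ⥤ F) (fShriek : F ⥤ E) (adj : fShriek ⊣ fStar)

lemma localConnComparison_fst {E' E'' : E} (u : E' ⟶ E'') (X : F) (α : X ⟶ fStar.obj E'') :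
    localConnComparison fStar fShriek adj u X α ≫ pullback.fst _ u =
      fShriek.map (pullback.fst α (fStar.map u)) :=
  pullback.lift_fst _ _ _

lemma localConnComparison_snd {E' E'' : E} (u : E' ⟶ E'') (X : F) (α : X ⟶ fStar.obj E'') :
    localConnComparison fStar fShriek adj u X α ≫ pullback.snd _ u =
      (adj.homEquiv _ _).symm (pullback.snd α (fStar.map u)) :=
  pullback.lift_snd _ _ _

lemma aux_forward {c : E} {X : F} (f : c ⟶ fShriek.obj X)
    (hiso : IsIso (localConnComparison fStar fShriek adj f X
      (adj.homEquiv X (fShriek.obj X) (𝟙 (fShriek.obj X))))) :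
    ∃ (d' : F) (fhat : d' ⟶ X) (σ : fShriek.obj d' ≅ c),
      IsCartesianFor fShriek fhat ∧ fShriek.map fhat = σ.hom ≫ f := by
  set η : X ⟶ fStar.obj (fShriek.obj X) := adj.homEquiv X (fShriek.obj X) (𝟙 (fShriek.obj X)) with hη
  have hsymm : (adj.homEquiv X (fShriek.obj X)).symm η = 𝟙 (fShriek.obj X) :=
    Equiv.symm_apply_apply _ _
  set fh := pullback.fst η (fStar.map f) with hfh
  set t : fShriek.obj (pullback η (fStar.map f)) ⟶ c :=
    (adj.homEquiv _ c).symm (pullback.snd η (fStar.map f)) with ht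
  have isot : IsIso t := by
    haveI : IsIso ((adj.homEquiv X (fShriek.obj X)).symm η) := by
      rw [hsymm]; infer_instance
    rw [ht, ← localConnComparison_snd fStar fShriek adj f X η]
    infer_instance
  have heq : fShriek.map fh = t ≫ f := by
    calc fShriek.map fh
        = fShriek.map fh ≫ (adj.homEquiv X (fShriek.obj X)).symm η := by
          rw [hsymm, Category.comp_id]
      _ = (adj.homEquiv _ _).symm (fh ≫ η) :=
          (Adjunction.homEquiv_naturality_left_symm _ _ _).symm
      _ = (adj.homEquiv _ _).symm
            (pullback.snd η (fStar.map f) ≫ fStar.map f) := by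
          rw [pullback.condition]
      _ = t ≫ f := Adjunction.homEquiv_naturality_right_symm _ _ _
  have hcart : IsCartesianFor fShriek fh := by
    intro d'' g h hcomm
    have w : g ≫ η = (adj.homEquiv d'' c (h ≫ t)) ≫ fStar.map f := by
      apply (adj.homEquiv d'' (fShriek.obj X)).symm.injective
      rw [Adjunction.homEquiv_naturality_left_symm, hsymm, Category.comp_id,
        Adjunction.homEquiv_naturality_right_symm, Equiv.symm_apply_apply,
        Category.assoc, ← heq, hcomm]
    refine ⟨pullback.lift g (adj.homEquiv d'' c (h ≫ t)) w, ⟨?_, pullback.lift_fst _ _ _⟩, ?_⟩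
    · rw [← cancel_mono t]
      calc fShriek.map (pullback.lift g (adj.homEquiv d'' c (h ≫ t)) w) ≫ t
          = (adj.homEquiv _ c).symm
              (pullback.lift g (adj.homEquiv d'' c (h ≫ t)) w ≫
                pullback.snd η (fStar.map f)) :=
            (Adjunction.homEquiv_naturality_left_symm _ _ _).symm
        _ = (adj.homEquiv d'' c).symm (adj.homEquiv d'' c (h ≫ t)) := by
            rw [pullback.lift_snd]
        _ = h ≫ t := Equiv.symm_apply_apply _ _
    · rintro h'' ⟨h1, h2⟩
      apply pullback.hom_ext
      · rw [pullback.lift_fst]; exact h2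
      · rw [pullback.lift_snd]
        apply (adj.homEquiv d'' c).symm.injective
        rw [Adjunction.homEquiv_naturality_left_symm, Equiv.symm_apply_apply, h1]
  exact ⟨_, fh, asIso t, hcart, heq⟩

lemma aux_backward (hfib : IsStreetFibration fShriek) {E' E'' : E} (u : E' ⟶ E'') (X : F)
    (α : X ⟶ fStar.obj E'') : IsIso (localConnComparison fStar fShriek adj u X α) := by
  obtain ⟨d', fhat, σ, hcart, heq⟩ :=
    hfib X (pullback ((adj.homEquiv X E'').symm α) u) (pullback.fst _ _)
  set cQ := localConnComparison fStar fShriek adj u X α with hcQ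
  have hw : fhat ≫ α =
      (adj.homEquiv d' E' (σ.hom ≫ pullback.snd ((adj.homEquiv X E'').symm α) u)) ≫
        fStar.map u := by
    apply (adj.homEquiv d' E'').symm.injective
    rw [Adjunction.homEquiv_naturality_left_symm,
      Adjunction.homEquiv_naturality_right_symm, Equiv.symm_apply_apply, heq,
      Category.assoc, pullback.condition, Category.assoc]
  set ψ := pullback.lift fhat _ hw with hψ
  have hψc : fShriek.map ψ ≫ cQ = σ.hom := by
    apply pullback.hom_ext
    · rw [Category.assoc, localConnComparison_fst, ← Functor.map_comp, pullback.lift_fst, heq]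
    · rw [Category.assoc, localConnComparison_snd,
        ← Adjunction.homEquiv_naturality_left_symm, pullback.lift_snd, Equiv.symm_apply_apply]
  obtain ⟨φ, ⟨hφ1, hφ2⟩, -⟩ := hcart (pullback.fst α (fStar.map u)) (cQ ≫ σ.inv)
    (by rw [Category.assoc, heq, Iso.inv_hom_id_assoc, localConnComparison_fst])
  have hφψ : φ ≫ ψ = 𝟙 _ := by
    apply pullback.hom_ext
    · rw [Category.assoc, pullback.lift_fst, hφ2, Category.id_comp]
    · rw [Category.assoc, pullback.lift_snd, Category.id_comp]
      apply (adj.homEquiv _ E').symm.injective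
      rw [Adjunction.homEquiv_naturality_left_symm, Equiv.symm_apply_apply, hφ1,
        Category.assoc, Iso.inv_hom_id_assoc, ← localConnComparison_snd fStar fShriek adj u X α]
  refine ⟨σ.inv ≫ fShriek.map ψ, ?_, ?_⟩
  · rw [← Category.assoc, ← hφ1, ← Functor.map_comp, hφψ, fShriek.map_id]
  · rw [Category.assoc, hψc, Iso.inv_hom_id]

end Aux

variable {Cs Ds : Type u} [SmallCategory Cs] [SmallCategory Ds]

/-- For an essential geometric morphism `f : Sheaf K ⟶ Sheaf J` (given by adjunctions
`f_! ⊣ f^* ⊣ f_*` with `f^*` preserving finite limits), `f` is locally connected (all the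
canonical comparison morphisms are isomorphisms) iff `f_!` is a Street fibration. -/
theorem locallyConnected_iff_shriek_isStreetFibration
    (J : GrothendieckTopology Cs) (K : GrothendieckTopology Ds)
    (fStar : Sheaf J (Type u) ⥤ Sheaf K (Type u))
    (fShriek : Sheaf K (Type u) ⥤ Sheaf J (Type u))
    (fLower : Sheaf K (Type u) ⥤ Sheaf J (Type u))
    (adjL : fShriek ⊣ fStar) (adjR : fStar ⊣ fLower)
    [PreservesFiniteLimits fStar] :
    (∀ (E' E'' : Sheaf J (Type u)) (u : E' ⟶ E'') (X : Sheaf K (Type u))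
        (α : X ⟶ fStar.obj E''), IsIso (localConnComparison fStar fShriek adjL u X α)) ↔
      IsStreetFibration fShriek := by
  constructor
  · intro hiso d c f
    exact aux_forward fStar fShriek adjL f
      (hiso c (fShriek.obj d) f d (adjL.homEquiv d (fShriek.obj d) (𝟙 (fShriek.obj d))))
  · intro hfib E' E'' u X α
    exact aux_backward fStar fShriek adjL hfib u X α
end

section
/- Let (𝒞,J) be a small site, c an object of 𝒞, 𝒟 a small category and F : 𝒟 ⥤ Over c a functor to the slice category of 𝒞 over c. Consider the cocone with vertex l_J(c) over the functor 𝒟 ⥤ Sheaf J sending d to l_J((F d).left), whose leg at d is l_J((F d).hom). This cocone is a colimit cocone if and only if: (1) the sieve on c generated by the morphisms (F d).hom for d ranging over the objects of 𝒟 is J-covering; and (2) whenever d₁, d₂ are objects of 𝒟, c' an object of 𝒞, and x : c' ⟶ (F d₁).left, x' : c' ⟶ (F d₂).left satisfy (F d₁).hom ∘ x = (F d₂).hom ∘ x', there is a family of morphisms (x_k : c'_k ⟶ c') generating a J-covering sieve on c' such that for each k, the objects (d₁, x ∘ x_k) and (d₂, x' ∘ x_k) lie in the same connected component of the comma category of c'_k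 under the composite functor 𝒟 ⥤ Over c ⥤ 𝒞 (i.e., the category whose objects are pairs (d, v : c'_k ⟶ (F d).left) and whose morphisms (d,v) ⟶ (d̄,v̄) are morphisms w : d ⟶ d̄ of 𝒟 with (F w).left ∘ v = v̄). -/
open CategoryTheory Limits

universe u

variable {C : Type u} [SmallCategory C] {D : Type u} [SmallCategory D]

/-- The diagram `𝒟 ⥤ Sheaf J` sending `d` to `l_J((F d).left)`. -/
noncomputable def overDiagram (J : GrothendieckTopology C) {c : C} (F : D ⥤ Over c) :
    D ⥤ Sheaf J (Type u) where
  obj d := (lSh J).obj ((F.obj d).left)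
  map w := (lSh J).map ((F.map w).left)
  map_id := by intros; simp
  map_comp := by intros; simp

/-- The cocone with vertex `l_J(c)` whose leg at `d` is `l_J((F d).hom)`. -/
noncomputable def overCocone (J : GrothendieckTopology C) {c : C} (F : D ⥤ Over c) :
    Cocone (overDiagram J F) where
  pt := (lSh J).obj c
  ι :=
    { app := fun d => (lSh J).map ((F.obj d).hom)
      naturality := by
        intro d₁ d₂ w
        show (lSh J).map ((F.map w).left) ≫ (lSh J).map ((F.obj d₂).hom) = _
        rw [← Functor.map_comp, Over.w (F.map w)]
        simp [overDiagram] }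

/-!
Write `G = F ⋙ Over.forget c`. The legs of `overCocone J F` are the images under sheafification
of the canonical map `φ : colim_d y(G d) ⟶ y(c)` of presheaves, so the cocone is a colimit iff
`φ` becomes an isomorphism after sheafification, i.e. iff `φ` is locally surjective and locally
injective. A section of `colim_d y(G d)` over `c'` is a connected component of the comma category
`c' ↓ G`, and `φ` sends the component of `(d, x)` to `x ≫ (F d).hom`. Hence local surjectivity
of `φ` is condition (1), and local injectivity is condition (2).
-/

open Opposite

namespace CategoryTheory

section ColimitOfRepresentables

variable {E : Type*} [Category.{u} E] (G : D ⥤ E) {X : E}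

lemma colimit_comp_yoneda_jointly_surjective (a : (colimit (G ⋙ yoneda)).obj (op X)) :
    ∃ (d : D) (x : X ⟶ G.obj d), (colimit.ι (G ⋙ yoneda) d).app (op X) x = a :=
  Types.jointly_surjective_of_isColimit
    (isColimitOfPreserves ((evaluation _ _).obj (op X)) (colimit.isColimit _)) a

lemma colimit_ι_comp_yoneda_app_eq_of_zigzag {A B : StructuredArrow X G} (h : Zigzag A B) :
    (colimit.ι (G ⋙ yoneda) A.right).app (op X) A.hom =
      (colimit.ι (G ⋙ yoneda) B.right).app (op X) B.hom := by
  have of_hom : ∀ {A B : StructuredArrow X G} (f : A ⟶ B),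
      (colimit.ι (G ⋙ yoneda) A.right).app (op X) A.hom =
        (colimit.ι (G ⋙ yoneda) B.right).app (op X) B.hom := fun {A B} f => by
    rw [← colimit.w (G ⋙ yoneda) f.right, ← StructuredArrow.w f]
    rfl
  induction h with
  | refl => rfl
  | tail _ hz ih =>
    rcases hz with ⟨⟨f⟩⟩ | ⟨⟨f⟩⟩
    · exact ih.trans (of_hom f)
    · exact ih.trans (of_hom f).symm

lemma colimit_ι_comp_yoneda_app_eq_iff_zigzag {d₁ d₂ : D} (x₁ : X ⟶ G.obj d₁)
    (x₂ : X ⟶ G.obj d₂) :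
    (colimit.ι (G ⋙ yoneda) d₁).app (op X) x₁ = (colimit.ι (G ⋙ yoneda) d₂).app (op X) x₂ ↔
      Zigzag (StructuredArrow.mk x₁) (StructuredArrow.mk x₂) := by
  refine ⟨fun h => ?_, colimit_ι_comp_yoneda_app_eq_of_zigzag G⟩
  simp only [← colimitObjIsoColimitCompEvaluation_ι_inv] at h
  exact Functor.Final.zigzag_of_eqvGen_colimitTypeRel
    (Types.colimit_eq ((colimitObjIsoColimitCompEvaluation _ _).toEquiv.symm.injective h))

end ColimitOfRepresentables

section LocalSurjectivity

variable {E : Type*} [Category.{u} E] {G : D ⥤ E} (s : Cocone G)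

lemma colimit_desc_yoneda_mapCocone_app_ι_app {X : E} {d : D} (x : X ⟶ G.obj d) :
    (colimit.desc (G ⋙ yoneda) (yoneda.mapCocone s)).app (op X)
      ((colimit.ι (G ⋙ yoneda) d).app (op X) x) = x ≫ s.ι.app d :=
  ConcreteCategory.congr_hom (colimit.ι_desc_app (G ⋙ yoneda) (yoneda.mapCocone s) d (op X)) x

lemma imageSieve_colimit_desc_yoneda_mapCocone {U : E} (g : U ⟶ s.pt) :
    Presheaf.imageSieve (colimit.desc (G ⋙ yoneda) (yoneda.mapCocone s)) g =
      (Sieve.ofArrows G.obj s.ι.app).pullback g := by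
  ext V v
  rw [Sieve.pullback_apply, Sieve.mem_ofArrows_iff]
  constructor
  · rintro ⟨a, ha⟩
    obtain ⟨d, x, rfl⟩ := colimit_comp_yoneda_jointly_surjective G a
    rw [colimit_desc_yoneda_mapCocone_app_ι_app] at ha
    exact ⟨d, x, ha.symm⟩
  · rintro ⟨d, x, hx⟩
    refine ⟨(colimit.ι (G ⋙ yoneda) d).app (op V) x, ?_⟩
    rw [colimit_desc_yoneda_mapCocone_app_ι_app]
    exact hx.symm

lemma ofArrows_mem_iff_isLocallySurjective_colimit_desc_yoneda_mapCocone
    (J : GrothendieckTopology E) :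
    Sieve.ofArrows G.obj s.ι.app ∈ J s.pt ↔
      Presheaf.IsLocallySurjective J (colimit.desc (G ⋙ yoneda) (yoneda.mapCocone s)) := by
  refine ⟨fun h => ⟨fun {U} g => ?_⟩, fun h => ?_⟩
  · rw [imageSieve_colimit_desc_yoneda_mapCocone]
    exact J.pullback_stable g h
  · have := Presheaf.imageSieve_mem J (colimit.desc (G ⋙ yoneda) (yoneda.mapCocone s))
      (U := op s.pt) (𝟙 s.pt)
    rwa [imageSieve_colimit_desc_yoneda_mapCocone, Sieve.pullback_id] at this

end LocalSurjectivity

lemma GrothendieckTopology.mem_iff_exists_ofArrows (J : GrothendieckTopology C) {X : C}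
    (S : Sieve X) :
    S ∈ J X ↔ ∃ (ι : Type u) (Y : ι → C) (f : ∀ i, Y i ⟶ X),
      Sieve.ofArrows Y f ∈ J X ∧ ∀ i, S (f i) := by
  refine ⟨fun h => ?_, fun ⟨ι, Y, f, hf, hS⟩ => ?_⟩
  · obtain ⟨ι, Y, f, rfl⟩ := S.exists_eq_ofArrows
    exact ⟨ι, Y, f, h, Sieve.ofArrows_mk Y f⟩
  · refine J.superset_covering ((Sieve.generate_le_iff _ _).2 ?_) hf
    rintro _ _ ⟨i⟩
    exact hS i

section LocalInjectivity

variable {G : D ⥤ C}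

lemma equalizerSieve_colimit_ι_comp_yoneda_app_iff {X : C} {d₁ d₂ : D} (x₁ : X ⟶ G.obj d₁)
    (x₂ : X ⟶ G.obj d₂) {Y : C} (g : Y ⟶ X) :
    Presheaf.equalizerSieve (F := colimit (G ⋙ yoneda))
        ((colimit.ι (G ⋙ yoneda) d₁).app (op X) x₁)
        ((colimit.ι (G ⋙ yoneda) d₂).app (op X) x₂) g ↔
      Zigzag (StructuredArrow.mk (g ≫ x₁)) (StructuredArrow.mk (g ≫ x₂)) := by
  rw [Presheaf.equalizerSieve_apply, ← NatTrans.naturality_apply, ← NatTrans.naturality_apply]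
  exact colimit_ι_comp_yoneda_app_eq_iff_zigzag G _ _

lemma isLocallyInjective_colimit_desc_yoneda_mapCocone_iff (s : Cocone G)
    (J : GrothendieckTopology C) :
    Presheaf.IsLocallyInjective J (colimit.desc (G ⋙ yoneda) (yoneda.mapCocone s)) ↔
      ∀ (d₁ d₂ : D) (X : C) (x₁ : X ⟶ G.obj d₁) (x₂ : X ⟶ G.obj d₂),
        x₁ ≫ s.ι.app d₁ = x₂ ≫ s.ι.app d₂ →
        ∃ (ι : Type u) (Y : ι → C) (f : ∀ i, Y i ⟶ X), Sieve.ofArrows Y f ∈ J X ∧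
          ∀ i, Zigzag (StructuredArrow.mk (f i ≫ x₁)) (StructuredArrow.mk (f i ≫ x₂)) := by
  simp only [← equalizerSieve_colimit_ι_comp_yoneda_app_iff, ← J.mem_iff_exists_ofArrows]
  refine ⟨fun h d₁ d₂ X x₁ x₂ hx =>
    Presheaf.equalizerSieve_mem J (colimit.desc (G ⋙ yoneda) (yoneda.mapCocone s)) _ _ ?_,
    fun h => ⟨fun {X} a b hab => ?_⟩⟩
  · rwa [colimit_desc_yoneda_mapCocone_app_ι_app, colimit_desc_yoneda_mapCocone_app_ι_app]
  · obtain ⟨d₁, x₁, rfl⟩ := colimit_comp_yoneda_jointly_surjective G a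
    obtain ⟨d₂, x₂, rfl⟩ := colimit_comp_yoneda_jointly_surjective G b
    rw [colimit_desc_yoneda_mapCocone_app_ι_app, colimit_desc_yoneda_mapCocone_app_ι_app] at hab
    exact h d₁ d₂ X.unop x₁ x₂ hab

end LocalInjectivity

lemma nonempty_isColimit_mapCocone_iff_isIso_map_desc {I A B : Type*} [Category I] [Category A]
    [Category B] {K : I ⥤ A} [HasColimit K] (L : A ⥤ B) [PreservesColimit K L] (s : Cocone K) :
    Nonempty (IsColimit (L.mapCocone s)) ↔ IsIso (L.map (colimit.desc K s)) := by
  rw [(isColimitOfPreserves L (colimit.isColimit K)).nonempty_isColimit_iff_isIso_desc,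
    preserves_desc_mapCocone]
  rfl

end CategoryTheory

lemma nonempty_isColimit_overCocone_iff (J : GrothendieckTopology C) {c : C} (F : D ⥤ Over c) :
    Nonempty (IsColimit (overCocone J F)) ↔ IsIso ((presheafToSheaf J (Type u)).map
      (colimit.desc _ (yoneda.mapCocone ((Over.forgetCocone c).whisker F)))) :=
  nonempty_isColimit_mapCocone_iff_isIso_map_desc (presheafToSheaf J (Type u))
    (yoneda.mapCocone ((Over.forgetCocone c).whisker F))

/-- The cocone with vertex `l_J(c)` over the objects `l_J((F d).left)` of a functor
`F : 𝒟 ⥤ Over c` is a colimit cocone iff (1) the morphisms `(F d).hom` generate a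
`J`-covering sieve on `c`, and (2) any two locally-agreeing generalized elements can be
locally connected by a zigzag in the relevant comma categories. -/
theorem overCocone_isColimit_iff (J : GrothendieckTopology C) {c : C} (F : D ⥤ Over c) :
    Nonempty (IsColimit (overCocone J F)) ↔
      ((Sieve.generate
          (Presieve.ofArrows (fun d : D => (F.obj d).left) (fun d => (F.obj d).hom)) ∈
            J c) ∧
        ∀ (d₁ d₂ : D) (c' : C) (x : c' ⟶ (F.obj d₁).left) (x' : c' ⟶ (F.obj d₂).left),
          x ≫ (F.obj d₁).hom = x' ≫ (F.obj d₂).hom →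
          ∃ (ι : Type u) (ck : ι → C) (xk : ∀ k, ck k ⟶ c'),
            Sieve.generate (Presieve.ofArrows ck xk) ∈ J c' ∧
            ∀ k, Zigzag
              (StructuredArrow.mk (T := F ⋙ Over.forget c) (Y := d₁) (xk k ≫ x))
              (StructuredArrow.mk (T := F ⋙ Over.forget c) (Y := d₂) (xk k ≫ x'))) := by
  rw [nonempty_isColimit_overCocone_iff, ← J.W_iff, J.W_iff_isLocallyBijective,
    isLocallyInjective_colimit_desc_yoneda_mapCocone_iff,
    ← ofArrows_mem_iff_isLocallySurjective_colimit_desc_yoneda_mapCocone]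
  exact and_comm
end

section
/- Let 𝒟 and 𝒞 be categories, G : 𝒞 ⥤ 𝒟 a functor, 𝒳 = Comma (𝟭 𝒟) G the comma category with objects (F, E, α : F ⟶ G(E)), π : 𝒳 ⥤ 𝒞 the second projection, and τ : 𝒞 ⥤ 𝒳 the functor sending E to (G(E), E, 𝟙_{G(E)}) and h : E ⟶ E' to (G(h), h). Then: (a) π is left adjoint to τ; and (b) if moreover G has a right adjoint R with adjunction unit μ : 𝟭_𝒞 ⟶ G ⋙ R and 𝒞 has pullbacks, then τ has a right adjoint which sends an object (F, E, α : F ⟶ G(E)) of 𝒳 to the pullback in 𝒞 of R(α) : R(F) ⟶ R(G(E)) along μ_E : E ⟶ R(G(E)). -/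
open CategoryTheory Limits

/-- The functor `τ : 𝒞 ⥤ Comma (𝟭 𝒟) G` sending `E` to `(G(E), E, 𝟙_{G(E)})`. -/
def tauFunctor {D : Type*} [Category D] {C : Type*} [Category C] (G : C ⥤ D) :
    C ⥤ Comma (𝟭 D) G where
  obj E := { left := G.obj E, right := E, hom := 𝟙 (G.obj E) }
  map h := { left := G.map h, right := h }

/-! A morphism `X ⟶ τ E` is determined by its component `h : X.right ⟶ E`, the other one being
forced to be `X.hom ≫ G.map h`; this gives `π ⊣ τ`. A morphism `τ E ⟶ X` is a pair
`g : G E ⟶ X.left`, `h : E ⟶ X.right` with `g ≫ X.hom = G.map h`. Transposing `g` along `G ⊣ R`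
turns this condition into `g♯ ≫ R.map X.hom = h ≫ μ_{X.right}`, so such pairs are exactly the
morphisms from `E` into the pullback of `R.map X.hom` along `μ_{X.right}`. -/

universe v₁ v₂ u₁ u₂

lemma CategoryTheory.Adjunction.homEquiv_comp_map_eq_comp_unit_iff
    {C : Type u₁} [Category.{v₁} C] {D : Type u₂} [Category.{v₂} D] {G : C ⥤ D} {R : D ⥤ C}
    (adj : G ⊣ R) {E B : C} {A : D}
    (g : G.obj E ⟶ A) (a : A ⟶ G.obj B) (h : E ⟶ B) :
    adj.homEquiv E A g ≫ R.map a = h ≫ adj.unit.app B ↔ g ≫ a = G.map h := by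
  rw [← adj.homEquiv_id, eq_comm, adj.homEquiv_naturality_left_square_iff, Category.comp_id,
    eq_comm]

namespace tauFunctor

variable {D : Type u₁} [Category.{v₁} D] {C : Type u₂} [Category.{v₂} C] {G : C ⥤ D}

lemma left_comp_hom_eq_map_right {E : C} {X : Comma (𝟭 D) G} (f : (tauFunctor G).obj E ⟶ X) :
    f.left ≫ X.hom = G.map f.right := by
  simpa [tauFunctor] using f.w

variable (G) in
def sndAdjunction : Comma.snd (𝟭 D) G ⊣ tauFunctor G :=
  Adjunction.mkOfHomEquiv
    { homEquiv X E :=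
        { toFun h := { left := X.hom ≫ G.map h, right := h, w := by simp [tauFunctor] }
          invFun f := f.right
          left_inv _ := rfl
          right_inv f := by ext; exacts [by simpa [tauFunctor] using f.w.symm, rfl] }
      homEquiv_naturality_left_symm _ _ := rfl
      homEquiv_naturality_right {X} _ _ _ _ := by
        ext
        · exact (X.hom ≫= G.map_comp _ _).trans (Category.assoc ..).symm
        · rfl }

variable {R : D ⥤ C} (adj : G ⊣ R) [HasPullbacks C]

noncomputable def liftToPullback {E : C} {X : Comma (𝟭 D) G} (f : (tauFunctor G).obj E ⟶ X) :
    E ⟶ pullback (R.map X.hom) (adj.unit.app X.right) :=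
  pullback.lift (adj.homEquiv E X.left f.left) f.right
    ((adj.homEquiv_comp_map_eq_comp_unit_iff _ _ _).2 (left_comp_hom_eq_map_right f))

lemma liftToPullback_fst {E : C} {X : Comma (𝟭 D) G} (f : (tauFunctor G).obj E ⟶ X) :
    liftToPullback adj f ≫ pullback.fst _ _ = adj.homEquiv E X.left f.left :=
  pullback.lift_fst _ _ _

lemma liftToPullback_snd {E : C} {X : Comma (𝟭 D) G} (f : (tauFunctor G).obj E ⟶ X) :
    liftToPullback adj f ≫ pullback.snd _ _ = f.right :=
  pullback.lift_snd _ _ _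

noncomputable def homEquivPullback (E : C) (X : Comma (𝟭 D) G) :
    ((tauFunctor G).obj E ⟶ X) ≃ (E ⟶ pullback (R.map X.hom) (adj.unit.app X.right)) where
  toFun := liftToPullback adj
  invFun p :=
    { left := (adj.homEquiv E X.left).symm (p ≫ pullback.fst _ _)
      right := p ≫ pullback.snd _ _
      w := by
        refine ((adj.homEquiv_comp_map_eq_comp_unit_iff
          ((adj.homEquiv E X.left).symm (p ≫ pullback.fst _ _)) X.hom
          (p ≫ pullback.snd _ _)).1 ?_).trans (Category.id_comp _).symm
        rw [Equiv.apply_symm_apply, Category.assoc, pullback.condition, Category.assoc] }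
  left_inv f := by
    ext
    · exact (congrArg _ (liftToPullback_fst adj f)).trans
        ((adj.homEquiv E X.left).symm_apply_apply _)
    · exact liftToPullback_snd adj f
  right_inv p := by
    apply pullback.hom_ext
    · exact (liftToPullback_fst adj _).trans ((adj.homEquiv E X.left).apply_symm_apply _)
    · exact liftToPullback_snd adj _

lemma liftToPullback_naturality {E' E : C} {X : Comma (𝟭 D) G} (h : E' ⟶ E)
    (f : (tauFunctor G).obj E ⟶ X) :
    liftToPullback adj ((tauFunctor G).map h ≫ f) = h ≫ liftToPullback adj f := by
  apply pullback.hom_ext <;> rw [Category.assoc]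
  · exact (liftToPullback_fst adj _).trans
      ((adj.homEquiv_naturality_left h f.left).trans (h ≫= liftToPullback_fst adj f).symm)
  · exact (liftToPullback_snd adj _).trans (h ≫= liftToPullback_snd adj f).symm

noncomputable def rightAdjoint : Comma (𝟭 D) G ⥤ C :=
  Adjunction.rightAdjointOfEquiv (homEquivPullback adj) fun _ _ _ => liftToPullback_naturality adj

noncomputable def adjunction : tauFunctor G ⊣ rightAdjoint adj :=
  Adjunction.adjunctionOfEquivRight _ _

end tauFunctor

/-- (a) The second projection `π : Comma (𝟭 𝒟) G ⥤ 𝒞` is left adjoint to `τ`; (b) if `G`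
has a right adjoint `R` with unit `μ` and `𝒞` has pullbacks, then `τ` has a right adjoint
sending `(F, E, α)` to the pullback of `R(α)` along `μ_E`. -/
theorem comma_snd_adjoint_and_tau_right_adjoint
    {D : Type*} [Category D] {C : Type*} [Category C] (G : C ⥤ D)
    (R : D ⥤ C) (adj : G ⊣ R) [HasPullbacks C] :
    Nonempty (Comma.snd (𝟭 D) G ⊣ tauFunctor G) ∧
      ∃ ρ : Comma (𝟭 D) G ⥤ C,
        Nonempty (tauFunctor G ⊣ ρ) ∧
          ∀ X : Comma (𝟭 D) G,
            Nonempty (ρ.obj X ≅ pullback (R.map X.hom) (adj.unit.app X.right)) :=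
  ⟨⟨tauFunctor.sndAdjunction G⟩, tauFunctor.rightAdjoint adj, ⟨tauFunctor.adjunction adj⟩,
    fun _ => ⟨Iso.refl _⟩⟩
end

section
/- Let 𝒟 be a category with pullbacks, 𝒞 a category, G, G' : 𝒞 ⥤ 𝒟 functors and α : G ⟶ G' a natural transformation. Then the functor Λ : Comma (𝟭 𝒟) G ⥤ Comma (𝟭 𝒟) G' sending an object (F, E, u : F ⟶ G(E)) to (F, E, α_E ∘ u) and a morphism (g, h) to (g, h) has a right adjoint, which sends an object (F', E, u' : F' ⟶ G'(E)) to (P, E, q), where (P, q : P ⟶ G(E), r : P ⟶ F') is the pullback in 𝒟 of α_E : G(E) ⟶ G'(E) and u' : F' ⟶ G'(E). -/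
open CategoryTheory Limits

/-- The functor `Λ : Comma (𝟭 𝒟) G ⥤ Comma (𝟭 𝒟) G'` given by postcomposition with a
natural transformation `α : G ⟶ G'`. -/
def postcompComma {D : Type*} [Category D] {C : Type*} [Category C] {G G' : C ⥤ D}
    (α : G ⟶ G') : Comma (𝟭 D) G ⥤ Comma (𝟭 D) G' where
  obj X := { left := X.left, right := X.right, hom := X.hom ≫ α.app X.right }
  map {X Y} φ :=
    { left := φ.left
      right := φ.right
      w := by
        have h := φ.w
        dsimp at h ⊢
        rw [← Category.assoc, h, Category.assoc, Category.assoc, α.naturality] }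

/-! A morphism `(F, E, α_E ∘ u) ⟶ (F', E', u')` is a pair `(g, h)` with `u' ∘ g = α_{E'} ∘ G(h) ∘ u`.
By the universal property of the pullback `P` of `α_{E'}` and `u'`, such a `g` is the same as a map
`F ⟶ P` whose composite with `q` is `G(h) ∘ u`, i.e. a morphism `(F, E, u) ⟶ (P, E', q)`. This
bijection is natural in the source, so `(F', E', u') ↦ (P, E', q)` extends to a right adjoint. -/

namespace CategoryTheory

variable {D : Type*} [Category D] {C : Type*} [Category C] [HasPullbacks D] {G G' : C ⥤ D}
  (α : G ⟶ G')

-- An `abbrev`, so that `simp` sees through its projections.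
noncomputable abbrev pullbackComma (X' : Comma (𝟭 D) G') : Comma (𝟭 D) G where
  left := pullback (α.app X'.right) X'.hom
  right := X'.right
  hom := pullback.fst (α.app X'.right) X'.hom

variable {α}

omit [HasPullbacks D] in
lemma postcompComma_hom_comm {X : Comma (𝟭 D) G} {Y' : Comma (𝟭 D) G'}
    (φ : (postcompComma α).obj X ⟶ Y') :
    (X.hom ≫ G.map φ.right) ≫ α.app Y'.right = φ.left ≫ Y'.hom := by
  simpa [postcompComma] using φ.w.symm

lemma pullbackComma_hom_comm {X : Comma (𝟭 D) G} {Y' : Comma (𝟭 D) G'}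
    (ψ : X ⟶ pullbackComma α Y') :
    ψ.left ≫ pullback.fst _ _ = X.hom ≫ G.map ψ.right :=
  ψ.w

noncomputable def postcompCommaHomEquiv (X : Comma (𝟭 D) G) (Y' : Comma (𝟭 D) G') :
    ((postcompComma α).obj X ⟶ Y') ≃ (X ⟶ pullbackComma α Y') where
  toFun φ :=
    { left := pullback.lift _ _ (postcompComma_hom_comm φ)
      right := φ.right
      w := pullback.lift_fst _ _ _ }
  invFun ψ :=
    { left := ψ.left ≫ pullback.snd _ _
      right := ψ.right
      w := by
        simp only [postcompComma, Functor.id_map, Category.assoc, ← pullback.condition]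
        rw [← Category.assoc, pullbackComma_hom_comm, Category.assoc, α.naturality] }
  left_inv φ := Comma.hom_ext _ _ (pullback.lift_snd _ _ _) rfl
  right_inv ψ := Comma.hom_ext _ _
    (pullback.hom_ext ((pullback.lift_fst _ _ _).trans (pullbackComma_hom_comm ψ).symm)
      (pullback.lift_snd _ _ _)) rfl

lemma postcompCommaHomEquiv_symm_naturality {X₁ X₂ : Comma (𝟭 D) G} {Y' : Comma (𝟭 D) G'}
    (f : X₁ ⟶ X₂) (ψ : X₂ ⟶ pullbackComma α Y') :
    (postcompCommaHomEquiv X₁ Y').symm (f ≫ ψ) =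
      (postcompComma α).map f ≫ (postcompCommaHomEquiv X₂ Y').symm ψ :=
  Comma.hom_ext _ _ (Category.assoc _ _ _) rfl

lemma postcompCommaHomEquiv_naturality {X₁ X₂ : Comma (𝟭 D) G} {Y' : Comma (𝟭 D) G'}
    (f : X₁ ⟶ X₂) (φ : (postcompComma α).obj X₂ ⟶ Y') :
    postcompCommaHomEquiv X₁ Y' ((postcompComma α).map f ≫ φ) =
      f ≫ postcompCommaHomEquiv X₂ Y' φ := by
  rw [← Equiv.eq_symm_apply, postcompCommaHomEquiv_symm_naturality, Equiv.symm_apply_apply]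

end CategoryTheory

/-- For `𝒟` with pullbacks, the postcomposition functor
`Λ : Comma (𝟭 𝒟) G ⥤ Comma (𝟭 𝒟) G'` has a right adjoint sending `(F', E, u')` to
`(P, E, q)` where `(P, q, r)` is the pullback of `α_E` and `u'`. -/
theorem postcompComma_has_right_adjoint
    {D : Type*} [Category D] {C : Type*} [Category C] [HasPullbacks D] {G G' : C ⥤ D}
    (α : G ⟶ G') :
    ∃ R : Comma (𝟭 D) G' ⥤ Comma (𝟭 D) G,
      Nonempty (postcompComma α ⊣ R) ∧
        ∀ X' : Comma (𝟭 D) G',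
          Nonempty (R.obj X' ≅
            { left := pullback (α.app X'.right) X'.hom
              right := X'.right
              hom := pullback.fst (α.app X'.right) X'.hom }) :=
  ⟨Adjunction.rightAdjointOfEquiv (G_obj := pullbackComma α) postcompCommaHomEquiv
      fun _ _ _ => postcompCommaHomEquiv_naturality,
    ⟨Adjunction.adjunctionOfEquivRight _ _⟩, fun _ => ⟨Iso.refl _⟩⟩
end
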